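/- arXiv:1801.02603 — 11 statements merged into one kernel-verified Lean document; each statement's English description precedes it below -/
import Mathlib

section
/- Let A be a finite alphabet, let (X, Y) be a strong alternative code over A, and set Z = XY. Then X = Zy⁻¹ for every y ∈ Y, and Y = x⁻¹Z for every x ∈ X. -/
/-- `X` is a code: every word has at most one factorization into words of `X`. -/
def IsCode {A : Type} (X : Language A) : Prop :=
  ∀ l m : List (List A), (∀ u ∈ l, u ∈ X) → (∀ u ∈ m, u ∈ X) →
    l.flatten = m.flatten → l = m

/-- `l` is an alternative factorization of `w` on `(X, Y)`. -/
def IsAltFact {A : Type} (X Y : Language A) (l : List (List A)) (w : List A) : Prop :=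
  2 ≤ l.length ∧ l.flatten = w ∧ (∀ u ∈ l, u ∈ X ∨ u ∈ Y) ∧
    l.Chain' (fun u v => (u ∈ X → v ∈ Y) ∧ (u ∈ Y → v ∈ X))

/-- Two alternative factorizations are similar: they both begin with words in the same
set (`X` or `Y`), and likewise both end with words in the same set. -/
def SimilarFacts {A : Type} (X Y : Language A) (l l' : List (List A)) : Prop :=
  ((l.headI ∈ X ∧ l'.headI ∈ X) ∨ (l.headI ∈ Y ∧ l'.headI ∈ Y)) ∧
  ((l.getLastI ∈ X ∧ l'.getLastI ∈ X) ∨ (l.getLastI ∈ Y ∧ l'.getLastI ∈ Y))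

/-- `(X, Y)` is an alternative code: `X`, `Y` are nonempty subsets of `A⁺` and no word
of `A⁺` admits two different similar alternative factorizations on `(X, Y)`. -/
def IsAltCode {A : Type} (X Y : Language A) : Prop :=
  X.Nonempty ∧ Y.Nonempty ∧ [] ∉ X ∧ [] ∉ Y ∧
  ∀ w : List A, w ≠ [] → ∀ l l' : List (List A),
    IsAltFact X Y l w → IsAltFact X Y l' w → SimilarFacts X Y l l' → l = l'

/-- `(X, Y)` is a strong alternative code: an alternative code with
`X⁻¹(XY) ⊆ Y` and `(XY)Y⁻¹ ⊆ X`. -/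
def IsStrongAltCode {A : Type} (X Y : Language A) : Prop :=
  IsAltCode X Y ∧
  {u : List A | ∃ x ∈ X, x ++ u ∈ X * Y} ⊆ Y ∧
  {u : List A | ∃ y ∈ Y, u ++ y ∈ X * Y} ⊆ X

/-- `Z` is a strong alt-induced code: `Z = XY` for some strong alternative code `(X, Y)`. -/
def IsStrongAltInduced {A : Type} (Z : Language A) : Prop :=
  ∃ X Y : Language A, IsStrongAltCode X Y ∧ Z = X * Y

/-- Prefix code: no word is a proper prefix of another word of `X`. -/
def IsPrefixCode {A : Type} (X : Language A) : Prop :=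
  ∀ u ∈ X, ∀ v ∈ X, u <+: v → u = v

/-- Suffix code: no word is a proper suffix of another word of `X`. -/
def IsSuffixCode {A : Type} (X : Language A) : Prop :=
  ∀ u ∈ X, ∀ v ∈ X, u <:+ v → u = v

/-- Bifix code: both a prefix code and a suffix code. -/
def IsBifixCode {A : Type} (X : Language A) : Prop :=
  IsPrefixCode X ∧ IsSuffixCode X

/-- p-infix code: no word in `X` is an infix of a proper prefix of another word in `X`. -/
def IsPInfixCode {A : Type} (X : Language A) : Prop :=
  ∀ u ∈ X, ∀ v ∈ X, u ≠ v → ∀ p : List A, p <+: v → p ≠ v → ¬ u <:+: p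

/-- s-infix code: no word in `X` is an infix of a proper suffix of another word in `X`. -/
def IsSInfixCode {A : Type} (X : Language A) : Prop :=
  ∀ u ∈ X, ∀ v ∈ X, u ≠ v → ∀ p : List A, p <:+ v → p ≠ v → ¬ u <:+: p

/-- Infix code: no word in `X` is an infix of a proper infix of another word in `X`. -/
def IsInfixCode {A : Type} (X : Language A) : Prop :=
  ∀ u ∈ X, ∀ v ∈ X, u ≠ v → ∀ p : List A, p <:+: v → p ≠ v → ¬ u <:+: p

/-- p-subinfix code: no word in `X` is a subword of a proper prefix of another word in `X`. -/
def IsPSubinfixCode {A : Type} (X : Language A) : Prop :=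
  ∀ u ∈ X, ∀ v ∈ X, u ≠ v → ∀ p : List A, p <+: v → p ≠ v → ¬ List.Sublist u p

/-- s-subinfix code: no word in `X` is a subword of a proper suffix of another word in `X`. -/
def IsSSubinfixCode {A : Type} (X : Language A) : Prop :=
  ∀ u ∈ X, ∀ v ∈ X, u ≠ v → ∀ p : List A, p <:+ v → p ≠ v → ¬ List.Sublist u p

/-- Subinfix code: no word in `X` is a subword of a proper infix of another word in `X`. -/
def IsSubinfixCode {A : Type} (X : Language A) : Prop :=
  ∀ u ∈ X, ∀ v ∈ X, u ≠ v → ∀ p : List A, p <:+: v → p ≠ v → ¬ List.Sublist u p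

/-- Hypercode: no word in `X` is a proper subword of another word in `X`. -/
def IsHypercode {A : Type} (X : Language A) : Prop :=
  ∀ u ∈ X, ∀ v ∈ X, List.Sublist u v → u = v

/-- Maximal prefix code: a prefix code not properly contained in any prefix code over `A`
(i.e. any nonempty subset of `A⁺` that is a prefix code). -/
def IsMaxPrefixCode {A : Type} (X : Language A) : Prop :=
  IsPrefixCode X ∧ ∀ X' : Language A, [] ∉ X' → IsPrefixCode X' → X ≤ X' → X' ≤ X

/-- Maximal suffix code. -/
def IsMaxSuffixCode {A : Type} (X : Language A) : Prop :=
  IsSuffixCode X ∧ ∀ X' : Language A, [] ∉ X' → IsSuffixCode X' → X ≤ X' → X' ≤ X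

/-- Maximal bifix code. -/
def IsMaxBifixCode {A : Type} (X : Language A) : Prop :=
  IsBifixCode X ∧ ∀ X' : Language A, [] ∉ X' → IsBifixCode X' → X ≤ X' → X' ≤ X

/-- `X` is thin: some word is not an infix of any word of `X`. -/
def IsThin {A : Type} (X : Language A) : Prop :=
  ∃ w : List A, ∀ x ∈ X, ¬ w <:+: x

/-- if `(X, Y)` is a strong alternative code and `Z = XY`, then
`X = Zy⁻¹` for every `y ∈ Y` and `Y = x⁻¹Z` for every `x ∈ X`. -/
theorem strongAltCode_quotients {A : Type} [Fintype A] (X Y Z : Language A)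
    (h : IsStrongAltCode X Y) (hZ : Z = X * Y) :
    (∀ y ∈ Y, X = {u : List A | u ++ y ∈ Z}) ∧
    (∀ x ∈ X, Y = {u : List A | x ++ u ∈ Z}) := by
  obtain ⟨_, hXY, hYX⟩ := h
  subst hZ
  constructor
  · intro y hy
    ext u
    constructor
    · intro hu
      exact Language.mem_mul.2 ⟨u, hu, y, hy, rfl⟩
    · intro hu
      exact hYX ⟨y, hy, hu⟩
  · intro x hx
    ext u
    constructor
    · intro hu
      exact Language.mem_mul.2 ⟨x, hx, u, hu, rfl⟩
    · intro hu
      exact hXY ⟨x, hx, hu⟩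
end

section
/- Let A be a finite alphabet, let (X, Y) be a strong alternative code over A, and set Z = XY. Then for every word w ∈ Z there exists a nonempty proper prefix u of w such that Y = u⁻¹Z. -/
/-- if `(X, Y)` is a strong alternative code and `Z = XY`, then every `w ∈ Z`
has a nonempty proper prefix `u` with `Y = u⁻¹Z`. -/
theorem strongAltCode_exists_prefix_quotient {A : Type} [Fintype A] (X Y Z : Language A)
    (h : IsStrongAltCode X Y) (hZ : Z = X * Y) :
    ∀ w ∈ Z, ∃ u v : List A, w = u ++ v ∧ u ≠ [] ∧ v ≠ [] ∧
      Y = {t : List A | u ++ t ∈ Z} := by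
  intro w hw
  rw [hZ, Language.mem_mul] at hw
  obtain ⟨x, hx, y, hy, hxy⟩ := hw
  obtain ⟨⟨_, _, hXe, hYe, _⟩, hsub, _⟩ := h
  refine ⟨x, y, hxy.symm, fun hx0 => hXe (hx0 ▸ hx), fun hy0 => hYe (hy0 ▸ hy), ?_⟩
  ext t
  constructor
  · intro ht
    show x ++ t ∈ Z
    rw [hZ, Language.mem_mul]
    exact ⟨x, hx, t, ht, rfl⟩
  · intro ht
    exact hsub ⟨x, hx, by rw [← hZ]; exact ht⟩
end

section
/- Let A be a finite alphabet. If Z and Z' are strong alt-induced codes over A that are both prefix codes, then the product ZZ' is a strong alt-induced code that is a prefix code. -/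
/-- Product of prefix codes is a prefix code. -/
lemma mul_prefixCode {A : Type} {P Q : Language A}
    (hP : IsPrefixCode P) (hQ : IsPrefixCode Q) : IsPrefixCode (P * Q) := by
  rintro u hu v hv huv
  obtain ⟨p1, hp1, q1, hq1, rfl⟩ := Language.mem_mul.1 hu
  obtain ⟨p2, hp2, q2, hq2, rfl⟩ := Language.mem_mul.1 hv
  have h1 : p1 <+: p2 ++ q2 := (List.prefix_append p1 q1).trans huv
  have h2 : p2 <+: p2 ++ q2 := List.prefix_append p2 q2
  have hpp : p1 = p2 := by
    rcases List.prefix_or_prefix_of_prefix h1 h2 with h | h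
    · exact hP p1 hp1 p2 hp2 h
    · exact (hP p2 hp2 p1 hp1 h).symm
  subst hpp
  have : q1 <+: q2 := by
    obtain ⟨t, ht⟩ := huv
    exact ⟨t, List.append_cancel_left (as := p1) (by simpa [List.append_assoc] using ht)⟩
  rw [hQ q1 hq1 q2 hq2 this]

/-- If `X * Y` is a prefix code and `X` is nonempty then `Y` is a prefix code. -/
lemma right_prefixCode {A : Type} {X Y : Language A} (hx : X.Nonempty)
    (h : IsPrefixCode (X * Y)) : IsPrefixCode Y := by
  rintro y1 h1 y2 h2 hpre
  obtain ⟨x, hxm⟩ := hx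
  obtain ⟨t, rfl⟩ := hpre
  have := h (x ++ y1) (Language.mem_mul.2 ⟨x, hxm, y1, h1, rfl⟩)
    (x ++ (y1 ++ t)) (Language.mem_mul.2 ⟨x, hxm, y1 ++ t, h2, rfl⟩)
    ⟨t, by simp [List.append_assoc]⟩
  have h3 := List.append_cancel_left (as := x) this
  simp [← h3]

/-- Front-peeling: two alternating factorizations over a pair of prefix codes with the
same flatten and similar heads are equal. -/
lemma altUniq {A : Type} {P S : Language A}
    (hP : IsPrefixCode P) (hS : IsPrefixCode S) (hla : [] ∉ P) (hlb : [] ∉ S) :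
    ∀ l l' : List (List A), (∀ u ∈ l, u ∈ P ∨ u ∈ S) → (∀ u ∈ l', u ∈ P ∨ u ∈ S) →
    l.Chain' (fun u v => (u ∈ P → v ∈ S) ∧ (u ∈ S → v ∈ P)) →
    l'.Chain' (fun u v => (u ∈ P → v ∈ S) ∧ (u ∈ S → v ∈ P)) →
    l.flatten = l'.flatten →
    (l = [] ∨ l' = [] ∨ (l.headI ∈ P ∧ l'.headI ∈ P) ∨ (l.headI ∈ S ∧ l'.headI ∈ S)) →
    l = l' := by
  intro l
  induction l with
  | nil =>
    intro l' _ hm' _ _ hflat _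
    cases l' with
    | nil => rfl
    | cons a t =>
      exfalso
      have : a ++ t.flatten = [] := by simpa using hflat.symm
      have ha : a = [] := by
        rcases List.append_eq_nil_iff.1 this with ⟨h, _⟩ <;> exact h
      rcases hm' a (by simp) with h | h
      · exact hla (ha ▸ h)
      · exact hlb (ha ▸ h)
  | cons a t ih =>
    intro l' hm hm' hc hc' hflat hhead
    cases l' with
    | nil =>
      exfalso
      have : a ++ t.flatten = [] := by simpa using hflat
      have ha : a = [] := by
        rcases List.append_eq_nil_iff.1 this with ⟨h, _⟩ <;> exact h
      rcases hm a (by simp) with h | h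
      · exact hla (ha ▸ h)
      · exact hlb (ha ▸ h)
    | cons a' t' =>
      have hfl : a ++ t.flatten = a' ++ t'.flatten := by simpa using hflat
      have hp1 : a <+: a' ++ t'.flatten := hfl ▸ List.prefix_append a t.flatten
      have hp2 : a' <+: a' ++ t'.flatten := List.prefix_append a' t'.flatten
      have haa : a = a' := by
        rcases hhead with h | h | ⟨h1, h2⟩ | ⟨h1, h2⟩
        · exact absurd h (by simp)
        · exact absurd h (by simp)
        · rcases List.prefix_or_prefix_of_prefix hp1 hp2 with h | h
          · exact hP a (by simpa using h1) a' (by simpa using h2) h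
          · exact (hP a' (by simpa using h2) a (by simpa using h1) h).symm
        · rcases List.prefix_or_prefix_of_prefix hp1 hp2 with h | h
          · exact hS a (by simpa using h1) a' (by simpa using h2) h
          · exact (hS a' (by simpa using h2) a (by simpa using h1) h).symm
      subst haa
      have hfl2 : t.flatten = t'.flatten := List.append_cancel_left hfl
      have htt : t = t' := by
        apply ih t' (fun u hu => hm u (by simp [hu])) (fun u hu => hm' u (by simp [hu]))
          hc.tail hc'.tail hfl2
        cases t with
        | nil => exact Or.inl rfl
        | cons b s =>
          cases t' with
          | nil => exact Or.inr (Or.inl rfl)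
          | cons b' s' =>
            have hr : (a ∈ P → b ∈ S) ∧ (a ∈ S → b ∈ P) := (List.isChain_cons_cons.1 hc).1
            have hr' : (a ∈ P → b' ∈ S) ∧ (a ∈ S → b' ∈ P) := (List.isChain_cons_cons.1 hc').1
            rcases hhead with h | h | ⟨h1, _⟩ | ⟨h1, _⟩
            · exact absurd h (by simp)
            · exact absurd h (by simp)
            · exact Or.inr (Or.inr (Or.inr ⟨hr.1 (by simpa using h1), hr'.1 (by simpa using h1)⟩))
            · exact Or.inr (Or.inr (Or.inl ⟨hr.2 (by simpa using h1), hr'.2 (by simpa using h1)⟩))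
      rw [htt]

/-- Uniqueness for 2-element similar alternative factorizations, specialized. -/
lemma uniq2 {A : Type} {X Y : Language A}
    (hcode : IsAltCode X Y) {a b a' b' : List A}
    (ha : a ∈ X) (ha' : a' ∈ X) (hb : b ∈ Y) (hb' : b' ∈ Y)
    (hab : a ∈ Y → b ∈ X) (hab' : a' ∈ Y → b' ∈ X)
    (hflat : a ++ b = a' ++ b') : a = a' := by
  obtain ⟨_, _, hX0, hY0, huniq⟩ := hcode
  have hane : a ≠ [] := fun h => hX0 (h ▸ ha)
  have hwne : a ++ b ≠ [] := fun h => hane (List.append_eq_nil_iff.1 h).1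
  have hfact : IsAltFact X Y [a, b] (a ++ b) := by
    refine ⟨by simp, by simp, ?_, ?_⟩
    · intro u hu
      simp only [List.mem_cons, List.not_mem_nil, or_false] at hu
      rcases hu with rfl | rfl
      · exact Or.inl ha
      · exact Or.inr hb
    · exact List.isChain_cons_cons.2 ⟨⟨fun _ => hb, hab⟩, by simp⟩
  have hfact' : IsAltFact X Y [a', b'] (a ++ b) := by
    refine ⟨by simp, by simp [hflat.symm], ?_, ?_⟩
    · intro u hu
      simp only [List.mem_cons, List.not_mem_nil, or_false] at hu
      rcases hu with rfl | rfl
      · exact Or.inl ha'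
      · exact Or.inr hb' 
    · exact List.isChain_cons_cons.2 ⟨⟨fun _ => hb', hab'⟩, by simp⟩
  have hsim : SimilarFacts X Y [a, b] [a', b'] := by
    constructor
    · exact Or.inl ⟨by simpa, by simpa⟩
    · refine Or.inr ⟨?_, ?_⟩ <;> simp [List.getLastI] <;> assumption
  have := huniq (a ++ b) hwne [a, b] [a', b'] hfact hfact' hsim
  exact (List.cons.injEq _ _ _ _ ▸ this).1

/-- In a strong alternative code whose product is a prefix code, `X` is a prefix code. -/
lemma left_prefixCode_of_strong {A : Type} {X Y : Language A}
    (h : IsStrongAltCode X Y) (hZp : IsPrefixCode (X * Y)) : IsPrefixCode X := by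
  obtain ⟨hcode, hC1, hC2⟩ := h
  obtain ⟨hXne, hYne, hX0, hY0, huniq⟩ := hcode
  have hYp : IsPrefixCode Y := right_prefixCode hXne hZp
  rintro x2 hx2 x1 hx1 hpre
  obtain ⟨t, rfl⟩ := hpre
  by_cases ht : t = []
  · simp [ht]
  exfalso
  have htne : x2 ++ t ≠ x2 := by
    intro h
    exact ht (by simpa using congrArg List.length h)
  by_cases h1 : x2 ++ t ∈ Y <;> by_cases h2 : x2 ∈ Y
  · exact htne ((hYp x2 h2 (x2 ++ t) h1 ⟨t, rfl⟩).symm)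
  · -- x1 ∈ Y, x2 ∉ Y
    have hty : t ++ (x2 ++ t) ∈ Y := hC1 ⟨x2, hx2, Language.mem_mul.2
      ⟨x2 ++ t, hx1, x2 ++ t, h1, by simp [List.append_assoc]⟩⟩
    have := uniq2 ⟨hXne, hYne, hX0, hY0, huniq⟩ hx1 hx2 h1 hty
      (fun _ => hx1) (fun h => absurd h h2)
      (by simp [List.append_assoc])
    exact htne this
  · -- x1 ∉ Y, x2 ∈ Y
    have hty : t ++ x2 ∈ Y := hC1 ⟨x2, hx2, Language.mem_mul.2
      ⟨x2 ++ t, hx1, x2, h2, by simp [List.append_assoc]⟩⟩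
    have hxtt : (x2 ++ t) ++ t ∈ X := hC2 ⟨x2, h2, Language.mem_mul.2
      ⟨x2 ++ t, hx1, t ++ x2, hty, by simp [List.append_assoc]⟩⟩
    have := uniq2 ⟨hXne, hYne, hX0, hY0, huniq⟩ hxtt hx1 h2 hty
      (fun _ => hx2) (fun h => absurd h h1)
      (by simp [List.append_assoc])
    have hl := congrArg List.length this
    simp only [List.length_append] at hl
    have hl0 : t.length = 0 := by omega
    exact ht (List.length_eq_zero_iff.1 hl0)
  · -- neither in Y
    obtain ⟨y0, hy0⟩ := id hYne
    have hty : t ++ y0 ∈ Y := hC1 ⟨x2, hx2, Language.mem_mul.2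
      ⟨x2 ++ t, hx1, y0, hy0, by simp [List.append_assoc]⟩⟩
    have := uniq2 ⟨hXne, hYne, hX0, hY0, huniq⟩ hx1 hx2 hy0 hty
      (fun h => absurd h h1) (fun h => absurd h h2)
      (by simp [List.append_assoc])
    exact htne this

/-- the product of two prefix strong alt-induced codes is a
prefix strong alt-induced code. -/
theorem strongAltInduced_mul_prefixCode {A : Type} [Fintype A] (Z Z' : Language A)
    (hZ : IsStrongAltInduced Z) (hZ' : IsStrongAltInduced Z')
    (h1 : IsPrefixCode Z) (h2 : IsPrefixCode Z') :
    IsStrongAltInduced (Z * Z') ∧ IsPrefixCode (Z * Z') := by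
  obtain ⟨X, Y, hsXY, hZeq⟩ := hZ
  obtain ⟨X', Y', hsXY', hZ'eq⟩ := hZ'
  obtain ⟨hcode', hC1', hC2'⟩ := hsXY'
  obtain ⟨hX'ne, hY'ne, hX'0, hY'0, huniq'⟩ := hcode'
  obtain ⟨⟨hXne, hYne, hX0, hY0, _⟩, _, _⟩ := hsXY
  have hX'p : IsPrefixCode X' :=
    left_prefixCode_of_strong ⟨⟨hX'ne, hY'ne, hX'0, hY'0, huniq'⟩, hC1', hC2'⟩ (hZ'eq ▸ h2)
  have hY'p : IsPrefixCode Y' := right_prefixCode hX'ne (hZ'eq ▸ h2)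
  have hZ0 : [] ∉ Z := by
    intro h
    rw [hZeq] at h
    obtain ⟨x, hx, y, hy, heq⟩ := Language.mem_mul.1 h
    exact hX0 ((List.append_eq_nil_iff.1 heq).1 ▸ hx)
  have hZne : Z.Nonempty := by
    obtain ⟨x, hx⟩ := hXne
    obtain ⟨y, hy⟩ := hYne
    exact ⟨x ++ y, hZeq ▸ Language.mem_mul.2 ⟨x, hx, y, hy, rfl⟩⟩
  have hPp : IsPrefixCode (Z * X') := mul_prefixCode h1 hX'p
  have hP0 : [] ∉ Z * X' := by
    intro h
    obtain ⟨z, hz, x', hx', heq⟩ := Language.mem_mul.1 h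
    exact hZ0 ((List.append_eq_nil_iff.1 heq).1 ▸ hz)
  have hPne : (Z * X').Nonempty := by
    obtain ⟨z, hz⟩ := hZne
    obtain ⟨x', hx'⟩ := hX'ne
    exact ⟨z ++ x', Language.mem_mul.2 ⟨z, hz, x', hx', rfl⟩⟩
  refine ⟨⟨Z * X', Y', ⟨⟨hPne, hY'ne, hP0, hY'0, ?_⟩, ?_, ?_⟩, ?_⟩, mul_prefixCode h1 h2⟩
  · -- alt code uniqueness
    intro w hw l l' hf hf' hsim
    exact altUniq hPp hY'p hP0 hY'0 l l' hf.2.2.1 hf'.2.2.1 hf.2.2.2 hf'.2.2.2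
      (hf.2.1.trans hf'.2.1.symm) (Or.inr (Or.inr hsim.1))
  · -- C1
    rintro u ⟨p, hp, hpu⟩
    obtain ⟨z, hz, x', hx', rfl⟩ := Language.mem_mul.1 hp
    obtain ⟨p1, hp1, s1, hs1, heq⟩ := Language.mem_mul.1 hpu
    obtain ⟨z1, hz1, x1', hx1', rfl⟩ := Language.mem_mul.1 hp1
    have heq2 : z1 ++ (x1' ++ s1) = z ++ (x' ++ u) := by
      simpa [List.append_assoc] using heq
    have hzz : z1 = z := by
      have ha : z1 <+: z ++ (x' ++ u) := ⟨x1' ++ s1, heq2⟩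
      have hb : z <+: z ++ (x' ++ u) := List.prefix_append _ _
      rcases List.prefix_or_prefix_of_prefix ha hb with h | h
      · exact h1 z1 hz1 z hz h
      · exact (h1 z hz z1 hz1 h).symm
    subst hzz
    have heq3 : x1' ++ s1 = x' ++ u := List.append_cancel_left heq2
    have hxx : x1' = x' := by
      have ha : x1' <+: x' ++ u := ⟨s1, heq3⟩
      have hb : x' <+: x' ++ u := List.prefix_append _ _
      rcases List.prefix_or_prefix_of_prefix ha hb with h | h
      · exact hX'p x1' hx1' x' hx' h
      · exact (hX'p x' hx' x1' hx1' h).symm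
    subst hxx
    have : s1 = u := List.append_cancel_left heq3
    exact this ▸ hs1
  · -- C2
    rintro u ⟨y', hy', huy⟩
    obtain ⟨p1, hp1, y1', hy1', heq⟩ := Language.mem_mul.1 huy
    obtain ⟨z, hz, x1', hx1', rfl⟩ := Language.mem_mul.1 hp1
    have ha : y1' <:+ u ++ y' := ⟨z ++ x1', by simpa [List.append_assoc] using heq⟩
    have hb : y' <:+ u ++ y' := ⟨u, rfl⟩
    rcases List.suffix_or_suffix_of_suffix ha hb with h | h
    · -- y1' suffix of y' : y' = t ++ y1'
      obtain ⟨t, rfl⟩ := h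
      obtain ⟨x0', hx0'⟩ := id hX'ne
      have hx0t : x0' ++ t ∈ X' := hC2' ⟨y1', hy1', Language.mem_mul.2
        ⟨x0', hx0', t ++ y1', hy', by simp [List.append_assoc]⟩⟩
      have : x0' = x0' ++ t := hX'p x0' hx0' (x0' ++ t) hx0t ⟨t, rfl⟩
      have ht : t = [] := by
        have hl := congrArg List.length this
        simp only [List.length_append] at hl
        have : t.length = 0 := by omega
        exact List.length_eq_zero_iff.1 this
      subst ht
      have hu : u = z ++ x1' := by
        have : u ++ ([] ++ y1') = (z ++ x1') ++ y1' := heq.symm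
        simpa using List.append_cancel_right (by simpa using this)
      exact hu ▸ Language.mem_mul.2 ⟨z, hz, x1', hx1', rfl⟩
    · -- y' suffix of y1' : y1' = t ++ y'
      obtain ⟨t, rfl⟩ := h
      have hx1t : x1' ++ t ∈ X' := hC2' ⟨y', hy', Language.mem_mul.2
        ⟨x1', hx1', t ++ y', hy1', by simp [List.append_assoc]⟩⟩
      have hu : u = z ++ (x1' ++ t) := by
        have h5 : u ++ y' = (z ++ (x1' ++ t)) ++ y' := by
          simpa [List.append_assoc] using heq.symm
        exact List.append_cancel_right h5
      exact hu ▸ Language.mem_mul.2 ⟨z, hz, x1' ++ t, hx1t, rfl⟩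
  · -- product equality
    rw [hZ'eq]
    exact (mul_assoc Z X' Y').symm
end

section
/- Let A be a finite alphabet. If Z and Z' are strong alt-induced codes over A that are both bifix codes, then the product ZZ' is a strong alt-induced code that is a bifix code. -/
/-- Uniqueness of alternating factorizations over two prefix codes,
given that the heads lie in the same set. -/
private lemma alt_unique {A : Type} {X Y : Language A}
    (hX : IsPrefixCode X) (hY : IsPrefixCode Y)
    (hXe : ([] : List A) ∉ X) (hYe : ([] : List A) ∉ Y) :
    ∀ l l' : List (List A), (∀ u ∈ l, u ∈ X ∨ u ∈ Y) → (∀ u ∈ l', u ∈ X ∨ u ∈ Y) →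
    l.Chain' (fun u v => (u ∈ X → v ∈ Y) ∧ (u ∈ Y → v ∈ X)) →
    l'.Chain' (fun u v => (u ∈ X → v ∈ Y) ∧ (u ∈ Y → v ∈ X)) →
    l.flatten = l'.flatten →
    ((l.headI ∈ X ∧ l'.headI ∈ X) ∨ (l.headI ∈ Y ∧ l'.headI ∈ Y)) →
    l = l' := by
  intro l
  induction l with
  | nil =>
    intro l' _ hm' _ _ hf _
    cases l' with
    | nil => rfl
    | cons u' t' =>
      exfalso
      simp only [List.flatten_nil, List.flatten_cons] at hf
      have hu' : u' = [] := by
        rcases List.append_eq_nil_iff.mp hf.symm with ⟨h, _⟩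
        exact h
      rcases hm' u' (by simp) with h | h
      · exact hXe (hu' ▸ h)
      · exact hYe (hu' ▸ h)
  | cons u t ih =>
    intro l' hm hm' hc hc' hf hhead
    cases l' with
    | nil =>
      exfalso
      simp only [List.flatten_cons, List.flatten_nil] at hf
      have hu : u = [] := (List.append_eq_nil_iff.mp hf).1
      rcases hm u (by simp) with h | h
      · exact hXe (hu ▸ h)
      · exact hYe (hu ▸ h)
    | cons u' t' =>
      simp only [List.flatten_cons] at hf
      have hp1 : u <+: u' ++ t'.flatten := hf ▸ ⟨t.flatten, rfl⟩
      have hp2 : u' <+: u' ++ t'.flatten := ⟨t'.flatten, rfl⟩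
      have hcomp := List.prefix_or_prefix_of_prefix hp1 hp2
      simp only [List.headI_cons] at hhead
      have huu : u = u' := by
        rcases hhead with ⟨h1, h2⟩ | ⟨h1, h2⟩
        · rcases hcomp with h | h
          · exact hX u h1 u' h2 h
          · exact (hX u' h2 u h1 h).symm
        · rcases hcomp with h | h
          · exact hY u h1 u' h2 h
          · exact (hY u' h2 u h1 h).symm
      subst huu
      have hft : t.flatten = t'.flatten := List.append_cancel_left hf
      have htt : t = t' := by
        cases t with
        | nil =>
          cases t' with
          | nil => rfl
          | cons v' s' =>
            exfalso
            simp only [List.flatten_nil, List.flatten_cons] at hft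
            have hv' : v' = [] := (List.append_eq_nil_iff.mp hft.symm).1
            rcases hm' v' (by simp) with h | h
            · exact hXe (hv' ▸ h)
            · exact hYe (hv' ▸ h)
        | cons v s =>
          cases t' with
          | nil =>
            exfalso
            simp only [List.flatten_cons, List.flatten_nil] at hft
            have hv : v = [] := (List.append_eq_nil_iff.mp hft).1
            rcases hm v (by simp) with h | h
            · exact hXe (hv ▸ h)
            · exact hYe (hv ▸ h)
          | cons v' s' =>
            have hrel := (List.isChain_cons_cons.mp hc).1
            have hrel' := (List.isChain_cons_cons.mp hc').1
            apply ih (v' :: s')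
            · intro x hx; exact hm x (List.mem_cons_of_mem _ hx)
            · intro x hx; exact hm' x (List.mem_cons_of_mem _ hx)
            · exact (List.isChain_cons_cons.mp hc).2
            · exact (List.isChain_cons_cons.mp hc').2
            · exact hft
            · simp only [List.headI_cons]
              rcases hhead with ⟨h1, _⟩ | ⟨h1, _⟩
              · exact Or.inr ⟨hrel.1 h1, hrel'.1 h1⟩
              · exact Or.inl ⟨hrel.2 h1, hrel'.2 h1⟩
      rw [htt]

/-- the product of two bifix strong alt-induced codes is a
bifix strong alt-induced code. -/
theorem strongAltInduced_mul_bifixCode {A : Type} [Fintype A] (Z Z' : Language A)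
    (hZ : IsStrongAltInduced Z) (hZ' : IsStrongAltInduced Z')
    (h1 : IsBifixCode Z) (h2 : IsBifixCode Z') :
    IsStrongAltInduced (Z * Z') ∧ IsBifixCode (Z * Z') := by
  -- basic facts about Z and Z'
  obtain ⟨X, Y, ⟨⟨⟨x0, hx0⟩, ⟨y0, hy0⟩, hXe, hYe, _⟩, _, _⟩, hZeq⟩ := hZ
  obtain ⟨X', Y', ⟨⟨⟨x0', hx0'⟩, ⟨y0', hy0'⟩, hXe', hYe', _⟩, _, _⟩, hZeq'⟩ := hZ'
  have hZne : Z.Nonempty := ⟨x0 ++ y0, hZeq ▸ ⟨x0, hx0, y0, hy0, rfl⟩⟩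
  have hZne' : Z'.Nonempty := ⟨x0' ++ y0', hZeq' ▸ ⟨x0', hx0', y0', hy0', rfl⟩⟩
  have hZnil : ([] : List A) ∉ Z := by
    intro h
    rw [hZeq] at h
    obtain ⟨a, ha, b, hb, hab⟩ := h
    exact hXe ((List.append_eq_nil_iff.mp hab).1 ▸ ha)
  have hZnil' : ([] : List A) ∉ Z' := by
    intro h
    rw [hZeq'] at h
    obtain ⟨a, ha, b, hb, hab⟩ := h
    exact hXe' ((List.append_eq_nil_iff.mp hab).1 ▸ ha)
  obtain ⟨hZp, hZs⟩ := h1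
  obtain ⟨hZp', hZs'⟩ := h2
  refine ⟨⟨Z, Z', ⟨⟨hZne, hZne', hZnil, hZnil', ?_⟩, ?_, ?_⟩, rfl⟩, ?_, ?_⟩
  · -- alternative code property
    rintro w hw l l' ⟨_, hfl, hm, hc⟩ ⟨_, hfl', hm', hc'⟩ ⟨hhead, _⟩
    exact alt_unique hZp hZp' hZnil hZnil' l l' hm hm' hc hc' (hfl.trans hfl'.symm) hhead
  · -- Z⁻¹(ZZ') ⊆ Z'
    rintro u ⟨z, hz, hmem⟩
    obtain ⟨a, ha, b, hb, hab⟩ := hmem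
    beta_reduce at hab
    have hp1 : z <+: a ++ b := hab ▸ ⟨u, rfl⟩
    have hp2 : a <+: a ++ b := ⟨b, rfl⟩
    have hza : z = a := by
      rcases List.prefix_or_prefix_of_prefix hp1 hp2 with h | h
      · exact hZp z hz a ha h
      · exact (hZp a ha z hz h).symm
    subst hza
    have : u = b := (List.append_cancel_left hab).symm
    exact this ▸ hb
  · -- (ZZ')Z'⁻¹ ⊆ Z
    rintro u ⟨y, hy, hmem⟩
    obtain ⟨a, ha, b, hb, hab⟩ := hmem
    beta_reduce at hab
    have hs1 : y <:+ a ++ b := hab ▸ ⟨u, rfl⟩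
    have hs2 : b <:+ a ++ b := ⟨a, rfl⟩
    have hyb : y = b := by
      rcases List.suffix_or_suffix_of_suffix hs1 hs2 with h | h
      · exact hZs' y hy b hb h
      · exact (hZs' b hb y hy h).symm
    subst hyb
    have : u = a := (List.append_cancel_right hab).symm
    exact this ▸ ha
  · -- prefix code
    rintro u ⟨a, ha, b, hb, rfl⟩ v ⟨c, hc, d, hd, rfl⟩ hpre
    beta_reduce at hpre ⊢
    have hp1 : a <+: c ++ d := (List.prefix_append a b).trans hpre
    have hac : a = c := by
      rcases List.prefix_or_prefix_of_prefix hp1 ⟨d, rfl⟩ with h | h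
      · exact hZp a ha c hc h
      · exact (hZp c hc a ha h).symm
    subst hac
    have hbd : b <+: d := (List.prefix_append_right_inj a).mp hpre
    rw [hZp' b hb d hd hbd]
  · -- suffix code
    rintro u ⟨a, ha, b, hb, rfl⟩ v ⟨c, hc, d, hd, rfl⟩ hsuf
    beta_reduce at hsuf ⊢
    have hs1 : b <:+ c ++ d := (List.suffix_append a b).trans hsuf
    have hbd : b = d := by
      rcases List.suffix_or_suffix_of_suffix hs1 ⟨c, rfl⟩ with h | h
      · exact hZs' b hb d hd h
      · exact (hZs' d hd b hb h).symm
    subst hbd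
    have hac : a <:+ c := by
      obtain ⟨t, ht⟩ := hsuf
      have hab : (t ++ a) ++ b = c ++ b := by rw [List.append_assoc]; exact ht
      exact ⟨t, List.append_cancel_right hab⟩
    rw [hZs a ha c hc hac]
end

section
/- Let A be a finite alphabet. If Z and Z' are strong alt-induced codes over A that are both p-infix codes, then the product ZZ' is a strong alt-induced code that is a p-infix code. -/
section SAIAux

variable {A : Type}

private lemma ne_app {x t : List A} (ht : t ≠ []) : x ++ t ≠ x := by
  intro h
  apply ht
  have h2 := congrArg List.length h
  rw [List.length_append] at h2
  exact List.eq_nil_of_length_eq_zero (by omega)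

private lemma pinfix_prefixCode {X : Language A} (h : IsPInfixCode X) : IsPrefixCode X := by
  intro u hu v hv huv
  by_contra hne
  exact h u hu v hv hne u huv hne (List.infix_refl u)

private lemma two_facts {X Y : Language A} (h : IsAltCode X Y)
    {a b c d : List A} (ha : a ∈ X) (hb : b ∈ X) (hc : c ∈ Y) (hd : d ∈ Y)
    (hac : a ∈ Y → c ∈ X) (hbd : b ∈ Y → d ∈ X)
    (heq : a ++ c = b ++ d) (hne : a ≠ b) : False := by
  obtain ⟨-, -, hX0, hY0, huniq⟩ := h
  have hane : a ≠ [] := fun h0 => hX0 (h0 ▸ ha)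
  have hw : a ++ c ≠ [] := fun h0 => hane (List.append_eq_nil_iff.mp h0).1
  have hfa : IsAltFact X Y [a, c] (a ++ c) := by
    refine ⟨by simp, by simp, ?_, ?_⟩
    · intro u hu
      rcases List.mem_pair.mp hu with rfl | rfl
      · exact Or.inl ha
      · exact Or.inr hc
    · exact List.isChain_cons_cons.mpr ⟨⟨fun _ => hc, hac⟩, List.isChain_singleton c⟩
  have hfb : IsAltFact X Y [b, d] (a ++ c) := by
    refine ⟨by simp, by simp [heq], ?_, ?_⟩
    · intro u hu
      rcases List.mem_pair.mp hu with rfl | rfl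
      · exact Or.inl hb
      · exact Or.inr hd
    · exact List.isChain_cons_cons.mpr ⟨⟨fun _ => hd, hbd⟩, List.isChain_singleton d⟩
  have hsim : SimilarFacts X Y [a, c] [b, d] := by
    refine ⟨Or.inl ⟨ha, hb⟩, Or.inr ⟨?_, ?_⟩⟩
    · simpa [List.getLastI] using hc
    · simpa [List.getLastI] using hd
  have heql := huniq (a ++ c) hw [a, c] [b, d] hfa hfb hsim
  injection heql with h1 _
  exact hne h1

end SAIAux
section SAIAux2

variable {A : Type}

private lemma mem_mul_of {X Y : Language A} {a b : List A} (ha : a ∈ X) (hb : b ∈ Y) :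
    a ++ b ∈ X * Y := Language.mem_mul.mpr ⟨a, ha, b, hb, rfl⟩

/-- If `w ∈ X ∩ Y` and `X` is closed under appending `t ≠ []`, contradiction. -/
private lemma no_overlap {X Y : Language A} (halt : IsAltCode X Y)
    (hc1 : {u : List A | ∃ x ∈ X, x ++ u ∈ X * Y} ⊆ Y)
    (hpre : IsPrefixCode (X * Y)) {t : List A} (ht : t ≠ [])
    (T' : ∀ x ∈ X, x ++ t ∈ X) {w : List A} (hwX : w ∈ X) (hwY : w ∈ Y) : False := by
  by_cases h2 : w ++ t ∈ Y
  · -- w++w and w++(w++t) both in X*Y, first a proper prefix of the second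
    have e1 : w ++ w ∈ X * Y := mem_mul_of hwX hwY
    have e2 : w ++ (w ++ t) ∈ X * Y := mem_mul_of hwX h2
    have := hpre (w ++ w) e1 (w ++ (w ++ t)) e2 ⟨t, by simp⟩
    exact ht (by simpa using this)
  · have hwt : w ++ t ∈ X := T' w hwX
    have hwtt : w ++ t ++ t ∈ X := T' _ hwt
    have hd : t ++ w ∈ Y := by
      apply hc1
      exact ⟨w, hwX, by
        have : w ++ (t ++ w) = (w ++ t) ++ w := by simp [List.append_assoc]
        rw [this]; exact mem_mul_of hwt hwY⟩
    exact two_facts halt hwtt hwt hwY hd (fun _ => hwX) (fun h => absurd h h2)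
      (by simp [List.append_assoc]) (ne_app ht)

private lemma strong_X_prefix {X Y : Language A} (h : IsStrongAltCode X Y)
    (hpre : IsPrefixCode (X * Y)) : IsPrefixCode X := by
  obtain ⟨halt, hc1, hc2⟩ := h
  obtain ⟨hXne, hYne, hX0, hY0, -⟩ := id halt
  intro x hx v hv hxv
  obtain ⟨t, rfl⟩ := hxv
  by_cases ht : t = []
  · simp [ht]
  exfalso
  have hxt : x ++ t ∈ X := hv
  have T : ∀ y ∈ Y, t ++ y ∈ Y := by
    intro y hy
    apply hc1
    exact ⟨x, hx, by
      have : x ++ (t ++ y) = (x ++ t) ++ y := by simp [List.append_assoc]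
      rw [this]; exact mem_mul_of hxt hy⟩
  obtain ⟨y₀, hy₀⟩ := hYne
  by_cases hxY : x ∈ Y
  · by_cases hxtY : x ++ t ∈ Y
    · have e1 : x ++ x ∈ X * Y := mem_mul_of hx hxY
      have e2 : x ++ (x ++ t) ∈ X * Y := mem_mul_of hx hxtY
      have := hpre (x ++ x) e1 (x ++ (x ++ t)) e2 ⟨t, by simp⟩
      exact ht (by simpa using this)
    · -- derive x++t++t ∈ X via hc2
      have httx : t ++ (t ++ x) ∈ Y := T _ (T _ hxY)
      have hxtt : x ++ t ++ t ∈ X := by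
        apply hc2
        exact ⟨x, hxY, by
          have : (x ++ t ++ t) ++ x = x ++ (t ++ (t ++ x)) := by simp [List.append_assoc]
          rw [this]; exact mem_mul_of hx httx⟩
      exact two_facts halt hxtt hxt hxY (T _ hxY) (fun _ => hx) (fun h => absurd h hxtY)
        (by simp [List.append_assoc]) (ne_app ht)
  · by_cases hxtY : x ++ t ∈ Y
    · exact two_facts halt hxt hx hxtY (T _ hxtY) (fun _ => hxt) (fun h => absurd h hxY)
        (by simp [List.append_assoc]) (ne_app ht)
    · exact two_facts halt hxt hx hy₀ (T _ hy₀) (fun h => absurd h hxtY) (fun h => absurd h hxY)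
        (by simp [List.append_assoc]) (ne_app ht)

private lemma strong_Y_suffix {X Y : Language A} (h : IsStrongAltCode X Y)
    (hpre : IsPrefixCode (X * Y)) : IsSuffixCode Y := by
  obtain ⟨halt, hc1, hc2⟩ := h
  obtain ⟨hXne, hYne, hX0, hY0, -⟩ := id halt
  intro y hy v hv hyv
  obtain ⟨t, rfl⟩ := hyv
  by_cases ht : t = []
  · simp [ht]
  exfalso
  have hty : t ++ y ∈ Y := hv
  have T' : ∀ x ∈ X, x ++ t ∈ X := by
    intro x hx
    apply hc2
    exact ⟨y, hy, by
      have : (x ++ t) ++ y = x ++ (t ++ y) := by simp [List.append_assoc]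
      rw [this]; exact mem_mul_of hx hty⟩
  obtain ⟨x₀, hx₀⟩ := hXne
  by_cases hyX : y ∈ X
  · exact no_overlap halt hc1 hpre ht T' hyX hy
  by_cases htyX : t ++ y ∈ X
  · exact no_overlap halt hc1 hpre ht T' htyX hty
  by_cases hx₀Y : x₀ ∈ Y
  · exact no_overlap halt hc1 hpre ht T' hx₀ hx₀Y
  by_cases hx₀tY : x₀ ++ t ∈ Y
  · exact no_overlap halt hc1 hpre ht T' (T' _ hx₀) hx₀tY
  · exact two_facts halt (T' _ hx₀) hx₀ hy hty (fun h => absurd h hx₀tY)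
      (fun h => absurd h hx₀Y) (by simp [List.append_assoc]) (ne_app ht)

end SAIAux2
section SAIAux3

variable {A : Type}

private lemma uniq_fact {P Q : Language A} (hP : IsPrefixCode P) (hQ : IsPrefixCode Q)
    (hP0 : [] ∉ P) (hQ0 : [] ∉ Q) :
    ∀ l l' : List (List A), l.flatten = l'.flatten →
      (∀ u ∈ l, u ∈ P ∨ u ∈ Q) → (∀ u ∈ l', u ∈ P ∨ u ∈ Q) →
      l.Chain' (fun u v => (u ∈ P → v ∈ Q) ∧ (u ∈ Q → v ∈ P)) →
      l'.Chain' (fun u v => (u ∈ P → v ∈ Q) ∧ (u ∈ Q → v ∈ P)) →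
      ((l.headI ∈ P ∧ l'.headI ∈ P) ∨ (l.headI ∈ Q ∧ l'.headI ∈ Q)) → l = l' := by
  intro l
  induction l with
  | nil =>
    intro l' hf hm hm' hc hc' hs
    cases l' with
    | nil => rfl
    | cons v tl =>
      exfalso
      have hv : v = [] := (List.flatten_eq_nil_iff.mp hf.symm) v (by simp)
      rcases hm' v (by simp) with h | h
      · exact hP0 (hv ▸ h)
      · exact hQ0 (hv ▸ h)
  | cons u tl ih =>
    intro l' hf hm hm' hc hc' hs
    cases l' with
    | nil =>
      exfalso
      have hu : u = [] := (List.flatten_eq_nil_iff.mp hf) u (by simp)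
      rcases hm u (by simp) with h | h
      · exact hP0 (hu ▸ h)
      · exact hQ0 (hu ▸ h)
    | cons u' tl' =>
      simp only [List.flatten_cons] at hf
      have hpre1 : u <+: u' ++ tl'.flatten := ⟨tl.flatten, hf⟩
      have hpre2 : u' <+: u' ++ tl'.flatten := ⟨tl'.flatten, rfl⟩
      have huu : u = u' := by
        rcases le_total u.length u'.length with hle | hle
        · have hp : u <+: u' := List.prefix_of_prefix_length_le hpre1 hpre2 hle
          rcases hs with ⟨h1, h2⟩ | ⟨h1, h2⟩
          · exact hP u h1 u' h2 hp
          · exact hQ u h1 u' h2 hp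
        · have hp : u' <+: u := List.prefix_of_prefix_length_le hpre2 hpre1 hle
          rcases hs with ⟨h1, h2⟩ | ⟨h1, h2⟩
          · exact (hP u' h2 u h1 hp).symm
          · exact (hQ u' h2 u h1 hp).symm
      subst huu
      have hft : tl.flatten = tl'.flatten := List.append_cancel_left hf
      have htt : tl = tl' := by
        cases tl with
        | nil =>
          cases tl' with
          | nil => rfl
          | cons v tt =>
            exfalso
            have hv : v = [] := (List.flatten_eq_nil_iff.mp hft.symm) v (by simp)
            rcases hm' v (by simp) with h | h
            · exact hP0 (hv ▸ h)
            · exact hQ0 (hv ▸ h)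
        | cons v tt =>
          cases tl' with
          | nil =>
            exfalso
            have hv : v = [] := (List.flatten_eq_nil_iff.mp hft) v (by simp)
            rcases hm v (by simp) with h | h
            · exact hP0 (hv ▸ h)
            · exact hQ0 (hv ▸ h)
          | cons v' tt' =>
            have hr : _ ∧ _ := List.isChain_cons_cons.mp hc
            have hr' : _ ∧ _ := List.isChain_cons_cons.mp hc'
            apply ih (v' :: tt') hft
              (fun w hw => hm w (List.mem_cons_of_mem _ hw))
              (fun w hw => hm' w (List.mem_cons_of_mem _ hw))
              hr.2 hr'.2
            rcases hs with ⟨h1, h2⟩ | ⟨h1, h2⟩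
            · exact Or.inr ⟨hr.1.1 h1, hr'.1.1 h1⟩
            · exact Or.inl ⟨hr.1.2 h1, hr'.1.2 h1⟩
      rw [htt]

private lemma prefix_altCode {P Q : Language A} (hP : IsPrefixCode P) (hQ : IsPrefixCode Q)
    (hPne : P.Nonempty) (hQne : Q.Nonempty) (hP0 : [] ∉ P) (hQ0 : [] ∉ Q) : IsAltCode P Q := by
  refine ⟨hPne, hQne, hP0, hQ0, ?_⟩
  intro w hw l l' hl hl' hsim
  exact uniq_fact hP hQ hP0 hQ0 l l' (hl.2.1.trans hl'.2.1.symm)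
    hl.2.2.1 hl'.2.2.1 hl.2.2.2 hl'.2.2.2 hsim.1

end SAIAux3
/-- the product of two p-infix strong alt-induced codes is a
p-infix strong alt-induced code. -/
theorem strongAltInduced_mul_pInfixCode {A : Type} [Fintype A] (Z Z' : Language A)
    (hZ : IsStrongAltInduced Z) (hZ' : IsStrongAltInduced Z')
    (h1 : IsPInfixCode Z) (h2 : IsPInfixCode Z') :
    IsStrongAltInduced (Z * Z') ∧ IsPInfixCode (Z * Z') := by
  have hZpre : IsPrefixCode Z := pinfix_prefixCode h1
  have hZ'pre : IsPrefixCode Z' := pinfix_prefixCode h2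
  constructor
  · -- strong alt-induced part: witness pair (Z * X', Y') where Z' = X' * Y'
    obtain ⟨X', Y', hs', hEq⟩ := hZ'
    subst hEq
    obtain ⟨halt', hc1', hc2'⟩ := id hs'
    obtain ⟨hX'ne, hY'ne, hX'0, hY'0, -⟩ := id halt'
    obtain ⟨X, Y, ⟨⟨hXne, hYne, hX0, hY0, -⟩, -, -⟩, hEqZ⟩ := hZ
    have hX'pre : IsPrefixCode X' := strong_X_prefix hs' hZ'pre
    have hY'suf : IsSuffixCode Y' := strong_Y_suffix hs' hZ'pre
    have hY'pre : IsPrefixCode Y' := by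
      intro y₁ hy₁ y₂ hy₂ hp
      obtain ⟨x', hx'⟩ := hX'ne
      obtain ⟨s, rfl⟩ := hp
      have e := hZ'pre (x' ++ y₁) (mem_mul_of hx' hy₁) (x' ++ (y₁ ++ s))
        (mem_mul_of hx' hy₂) ⟨s, by simp⟩
      exact List.append_cancel_left e
    obtain ⟨x₀, hx₀⟩ := hXne
    obtain ⟨y₀, hy₀⟩ := hYne
    have hZne : Z.Nonempty := ⟨x₀ ++ y₀, by rw [hEqZ]; exact mem_mul_of hx₀ hy₀⟩
    have hZ0 : [] ∉ Z := by
      rw [hEqZ]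
      intro h0
      obtain ⟨a, ha, b, hb, hab⟩ := Language.mem_mul.mp h0
      exact hX0 ((List.append_eq_nil_iff.mp hab).1 ▸ ha)
    obtain ⟨x'₀, hx'₀⟩ := hX'ne
    obtain ⟨z₀, hz₀⟩ := hZne
    have hUne : (Z * X').Nonempty := ⟨z₀ ++ x'₀, mem_mul_of hz₀ hx'₀⟩
    have hU0 : [] ∉ Z * X' := by
      intro h0
      obtain ⟨a, ha, b, hb, hab⟩ := Language.mem_mul.mp h0
      exact hZ0 ((List.append_eq_nil_iff.mp hab).1 ▸ ha)
    have hUpre : IsPrefixCode (Z * X') := by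
      intro u hu v hv huv
      obtain ⟨z₁, hz₁, x₁, hx₁, rfl⟩ := Language.mem_mul.mp hu
      obtain ⟨z₂, hz₂, x₂, hx₂, rfl⟩ := Language.mem_mul.mp hv
      obtain ⟨s, hs⟩ := huv
      have hz1p : z₁ <+: z₂ ++ x₂ := ⟨x₁ ++ s, by rw [← hs]; simp [List.append_assoc]⟩
      have hz2p : z₂ <+: z₂ ++ x₂ := ⟨x₂, rfl⟩
      have hzz : z₁ = z₂ := by
        rcases le_total z₁.length z₂.length with hle | hle
        · exact hZpre _ hz₁ _ hz₂ (List.prefix_of_prefix_length_le hz1p hz2p hle)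
        · exact (hZpre _ hz₂ _ hz₁ (List.prefix_of_prefix_length_le hz2p hz1p hle)).symm
      subst hzz
      have hxs : x₁ ++ s = x₂ := by
        rw [List.append_assoc] at hs
        exact List.append_cancel_left hs
      have hx12 : x₁ = x₂ := hX'pre _ hx₁ _ hx₂ ⟨s, hxs⟩
      rw [hx12]
    have haltUV : IsAltCode (Z * X') Y' :=
      prefix_altCode hUpre hY'pre hUne hY'ne hU0 hY'0
    refine ⟨Z * X', Y', ⟨haltUV, ?_, ?_⟩, (mul_assoc Z X' Y').symm⟩
    · -- (Z*X')⁻¹((Z*X')Y') ⊆ Y'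
      intro u hu
      obtain ⟨p, hp, hpu⟩ := hu
      obtain ⟨z₁, hz₁, x₁, hx₁, rfl⟩ := Language.mem_mul.mp hp
      obtain ⟨q, hq, b, hb, hab⟩ := Language.mem_mul.mp hpu
      obtain ⟨z₂, hz₂, x₂, hx₂, rfl⟩ := Language.mem_mul.mp hq
      have hz1p : z₁ <+: z₁ ++ x₁ ++ u := ⟨x₁ ++ u, by simp [List.append_assoc]⟩
      have hz2p : z₂ <+: z₁ ++ x₁ ++ u := ⟨x₂ ++ b, by rw [← hab]; simp [List.append_assoc]⟩
      have hzz : z₁ = z₂ := by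
        rcases le_total z₁.length z₂.length with hle | hle
        · exact hZpre _ hz₁ _ hz₂ (List.prefix_of_prefix_length_le hz1p hz2p hle)
        · exact (hZpre _ hz₂ _ hz₁ (List.prefix_of_prefix_length_le hz2p hz1p hle)).symm
      subst hzz
      have hx2b : x₂ ++ b = x₁ ++ u := by
        have h' : z₁ ++ (x₂ ++ b) = z₁ ++ (x₁ ++ u) := by
          rw [← List.append_assoc, hab]; simp [List.append_assoc]
        exact List.append_cancel_left h'
      have hx1p : x₁ <+: x₁ ++ u := ⟨u, rfl⟩
      have hx2p : x₂ <+: x₁ ++ u := ⟨b, hx2b⟩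
      have hxx : x₁ = x₂ := by
        rcases le_total x₁.length x₂.length with hle | hle
        · exact hX'pre _ hx₁ _ hx₂ (List.prefix_of_prefix_length_le hx1p hx2p hle)
        · exact (hX'pre _ hx₂ _ hx₁ (List.prefix_of_prefix_length_le hx2p hx1p hle)).symm
      subst hxx
      have : b = u := List.append_cancel_left hx2b
      exact this ▸ hb
    · -- ((Z*X')Y')Y'⁻¹ ⊆ Z*X'
      intro u hu
      obtain ⟨y, hy, huy⟩ := hu
      obtain ⟨q, hq, b, hb, hab⟩ := Language.mem_mul.mp huy
      have hys : y <:+ u ++ y := ⟨u, rfl⟩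
      have hbs : b <:+ u ++ y := ⟨q, hab⟩
      have hyb : y = b := by
        rcases List.suffix_or_suffix_of_suffix hys hbs with h | h
        · exact hY'suf _ hy _ hb h
        · exact (hY'suf _ hb _ hy h).symm
      subst hyb
      have : q = u := List.append_cancel_right hab
      exact this ▸ hq
  · -- p-infix part
    intro u hu v hv huv p hpv hpvne hinf
    obtain ⟨z₁, hz₁, w₁, hw₁, rfl⟩ := Language.mem_mul.mp hu
    obtain ⟨z₂, hz₂, w₂, hw₂, rfl⟩ := Language.mem_mul.mp hv
    obtain ⟨α, β, hab⟩ := hinf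
    obtain ⟨γ, hγ⟩ := hpv
    have hγne : γ ≠ [] := by
      rintro rfl
      exact hpvne (by simpa using hγ)
    have hkey : z₂ ++ w₂ = α ++ z₁ ++ (w₁ ++ (β ++ γ)) := by
      rw [← hγ, ← hab]; simp [List.append_assoc]
    have hδne : β ++ γ ≠ [] := fun h0 => hγne (List.append_eq_nil_iff.mp h0).2
    have hδpos : 0 < (β ++ γ).length := List.length_pos_iff.mpr hδne
    have hA : α ++ z₁ <+: z₂ ++ w₂ := ⟨w₁ ++ (β ++ γ), by rw [hkey]⟩
    have hB : z₂ <+: z₂ ++ w₂ := ⟨w₂, rfl⟩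
    rcases lt_trichotomy (α ++ z₁).length z₂.length with hlt | heq | hgt
    · -- z₁ is an infix of the proper prefix α ++ z₁ of z₂
      have hp2 : α ++ z₁ <+: z₂ := List.prefix_of_prefix_length_le hA hB (le_of_lt hlt)
      have hlen : z₁.length < z₂.length := by
        rw [List.length_append] at hlt; omega
      exact h1 z₁ hz₁ z₂ hz₂ (fun h0 => by rw [h0] at hlen; omega) (α ++ z₁) hp2
        (fun h0 => by rw [h0] at hlt; omega) ⟨α, [], by simp⟩
    · -- boundary aligned: w₁ a proper prefix of w₂, contradicting Z' prefix code
      have hp2 : α ++ z₁ = z₂ :=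
        List.IsPrefix.eq_of_length (List.prefix_of_prefix_length_le hA hB (le_of_eq heq)) heq
      rw [← hp2] at hkey
      have hw12 : w₂ = w₁ ++ (β ++ γ) := List.append_cancel_left hkey
      have : w₁ = w₂ := hZ'pre _ hw₁ _ hw₂ ⟨β ++ γ, hw12.symm⟩
      rw [this] at hw12
      exact ne_app hδne hw12.symm
    · -- w₁ is an infix of a proper prefix of w₂
      have hp2 : z₂ <+: α ++ z₁ := List.prefix_of_prefix_length_le hB hA (le_of_lt hgt)
      obtain ⟨e, he⟩ := hp2
      have hw2 : w₂ = e ++ (w₁ ++ (β ++ γ)) := by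
        have h' : z₂ ++ w₂ = z₂ ++ (e ++ (w₁ ++ (β ++ γ))) := by
          rw [hkey, ← he]; simp [List.append_assoc]
        exact List.append_cancel_left h'
      have hlen : (e ++ w₁).length < w₂.length := by
        rw [hw2]; simp only [List.length_append] at hδpos ⊢; omega
      have hlen' : w₁.length < w₂.length := by
        rw [List.length_append] at hlen; omega
      exact h2 w₁ hw₁ w₂ hw₂ (fun h0 => by rw [h0] at hlen'; omega) (e ++ w₁)
        ⟨β ++ γ, by rw [hw2]; simp [List.append_assoc]⟩
        (fun h0 => by rw [h0] at hlen; omega) ⟨e, [], by simp⟩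
end

section
/- Let A be a finite alphabet. If Z and Z' are strong alt-induced codes over A that are both p-subinfix codes, then the product ZZ' is a strong alt-induced code that is a p-subinfix code. -/
/-!
As `X` and `Y` may meet, `x, xt ∈ X` with `t ≠ ε` do not at once give two similar alternative
factorizations `x·ty = xt·y`: a factor in `X ∩ Y` must be followed by a word of `X`. The closure
conditions of a strong alternative code give `xt ∈ X ↔ ty ∈ Y` for `x ∈ X`, `y ∈ Y`, hence
`x, xt, xt² ∈ X` and `y, ty, t²y ∈ Y`. When `XY` is a prefix code so is `Y`, so at most one of
`x, xt, xt²` lies in `Y`, and the other two do give such a pair. Thus `X` is a prefix code, and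
dually `Y` is a suffix code.

For `Z = XY` and `Z' = X'Y'` this makes `ZX'` and `Y'` prefix codes, over which alternating
factorizations are unique, so `ZZ' = (ZX')Y'` with `(ZX', Y')` a strong alternative code.
For the p-subinfix property, a subword `ab` of a proper prefix of `cd` is split at the boundary
between `c` and `d`.
-/

variable {A : Type} {X Y Z : Language A}

theorem IsPrefixCode.eq_of_append_eq (h : IsPrefixCode X) {u v s t : List A} (hu : u ∈ X)
    (hv : v ∈ X) (e : u ++ s = v ++ t) : u = v := by
  rcases List.prefix_or_prefix_of_prefix ⟨s, e⟩ (List.prefix_append v t) with huv | hvu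
  · exact h u hu v hv huv
  · exact (h v hv u hu hvu).symm

theorem IsSuffixCode.eq_of_append_eq (h : IsSuffixCode X) {u v s t : List A} (hu : u ∈ X)
    (hv : v ∈ X) (e : s ++ u = t ++ v) : u = v := by
  rcases List.suffix_or_suffix_of_suffix ⟨s, e⟩ (List.suffix_append t v) with huv | hvu
  · exact h u hu v hv huv
  · exact (h v hv u hu hvu).symm

theorem IsPrefixCode.mul (hX : IsPrefixCode X) (hY : IsPrefixCode Y) : IsPrefixCode (X * Y) := by
  rintro _ hu _ hv ⟨s, e⟩
  obtain ⟨a, ha, b, hb, rfl⟩ := Language.mem_mul.1 hu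
  obtain ⟨c, hc, d, hd, rfl⟩ := Language.mem_mul.1 hv
  rw [List.append_assoc] at e
  obtain rfl := hX.eq_of_append_eq ha hc e
  rw [hY b hb d hd ⟨s, List.append_cancel_left e⟩]

theorem IsPrefixCode.of_mul_right (h : IsPrefixCode (X * Y)) (hX : X.Nonempty) :
    IsPrefixCode Y := by
  rintro u hu _ hv ⟨s, rfl⟩
  obtain ⟨x, hx⟩ := hX
  exact List.append_cancel_left <| h _ (Language.append_mem_mul hx hu) _
    (Language.append_mem_mul hx hv) ⟨s, by simp⟩

theorem Language.nil_not_mem_mul_of_left (hX : [] ∉ X) : [] ∉ X * Y := by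
  intro h
  obtain ⟨a, ha, b, -, hab⟩ := Language.mem_mul.1 h
  exact hX ((List.append_eq_nil_iff.1 hab).1 ▸ ha)

theorem IsPSubinfixCode.isPrefixCode (h : IsPSubinfixCode X) : IsPrefixCode X := by
  intro u hu v hv huv
  by_contra hne
  exact h u hu v hv hne u huv hne (List.Sublist.refl u)

theorem IsPSubinfixCode.not_sublist (h : IsPSubinfixCode X) {u v p : List A} (hu : u ∈ X)
    (hv : v ∈ X) (hp : p <+: v) (hpv : p ≠ v) : ¬ u.Sublist p := by
  intro hup
  obtain rfl | huv := eq_or_ne u v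
  · exact hpv (hp.eq_of_length (le_antisymm hp.length_le hup.length_le))
  · exact h u hu v hv huv p hp hpv hup

theorem IsPSubinfixCode.mul (hX : IsPSubinfixCode X) (hY : IsPSubinfixCode Y) :
    IsPSubinfixCode (X * Y) := by
  rintro _ hu _ hv - p ⟨r, e⟩ hpv hsub
  obtain ⟨a, ha, b, hb, rfl⟩ := Language.mem_mul.1 hu
  obtain ⟨c, hc, d, hd, rfl⟩ := Language.mem_mul.1 hv
  obtain ⟨p₁, p₂, rfl, hap, hbp⟩ := List.append_sublist_iff.1 hsub
  have hr : r ≠ [] := by rintro rfl; exact hpv (by simpa using e)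
  by_cases hcp : c <+: p₁
  · obtain ⟨s, rfl⟩ := hcp
    have hsd : s ++ p₂ ++ r = d := List.append_cancel_left (as := c) (by simpa using e)
    refine hY.not_sublist hb hd ⟨r, hsd⟩ ?_ (hbp.trans (List.sublist_append_right s p₂))
    rintro rfl
    exact hr (by simpa using hsd)
  · have hpc : p₁ <+: c := (List.prefix_or_prefix_of_prefix ⟨p₂ ++ r, by simpa using e⟩
      (List.prefix_append c d)).resolve_right hcp
    exact hX.not_sublist ha hc hpc (fun h => hcp (h ▸ List.prefix_refl p₁)) hap

theorem eq_of_flatten_eq_of_isPrefixCode (hX : IsPrefixCode X) (hY : IsPrefixCode Y)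
    (hXe : [] ∉ X) (hYe : [] ∉ Y) {l l' : List (List A)}
    (hl : ∀ u ∈ l, u ∈ X ∨ u ∈ Y) (hl' : ∀ u ∈ l', u ∈ X ∨ u ∈ Y)
    (hc : l.IsChain fun u v => (u ∈ X → v ∈ Y) ∧ (u ∈ Y → v ∈ X))
    (hc' : l'.IsChain fun u v => (u ∈ X → v ∈ Y) ∧ (u ∈ Y → v ∈ X))
    (hfl : l.flatten = l'.flatten)
    (hhead : (l.headI ∈ X ∧ l'.headI ∈ X) ∨ (l.headI ∈ Y ∧ l'.headI ∈ Y)) : l = l' := by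
  have eq_nil_of_flatten :
      ∀ {m : List (List A)}, (∀ u ∈ m, u ∈ X ∨ u ∈ Y) → m.flatten = [] → m = [] := by
    rintro (_ | ⟨u, m⟩) hm hfl
    · rfl
    · obtain rfl : u = [] := (List.flatten_eq_nil_iff.1 hfl) u (by simp)
      rcases hm [] (by simp) with h | h <;> contradiction
  induction l generalizing l' with
  | nil => rcases hhead with ⟨h, -⟩ | ⟨h, -⟩ <;> contradiction
  | cons u tl ih =>
    rcases l' with _ | ⟨v, tl'⟩
    · rcases hhead with ⟨-, h⟩ | ⟨-, h⟩ <;> contradiction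
    simp only [List.headI, List.flatten_cons] at hhead hfl
    obtain rfl : u = v := by
      rcases hhead with ⟨hu, hv⟩ | ⟨hu, hv⟩
      exacts [hX.eq_of_append_eq hu hv hfl, hY.eq_of_append_eq hu hv hfl]
    replace hfl := List.append_cancel_left hfl
    congr 1
    rcases tl with _ | ⟨a, r⟩ <;> rcases tl' with _ | ⟨b, r'⟩
    · rfl
    · exact (eq_nil_of_flatten (fun w hw => hl' w (List.mem_cons_of_mem _ hw)) hfl.symm).symm
    · exact eq_nil_of_flatten (fun w hw => hl w (List.mem_cons_of_mem _ hw)) hfl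
    · obtain ⟨hua, hc⟩ := List.isChain_cons_cons.1 hc
      obtain ⟨hub, hc'⟩ := List.isChain_cons_cons.1 hc'
      refine ih (fun w hw => hl w (List.mem_cons_of_mem _ hw))
        (fun w hw => hl' w (List.mem_cons_of_mem _ hw)) hc hc' hfl ?_
      rcases hhead with ⟨hu, hu'⟩ | ⟨hu, hu'⟩
      exacts [Or.inr ⟨hua.1 hu, hub.1 hu'⟩, Or.inl ⟨hua.2 hu, hub.2 hu'⟩]

theorem IsPrefixCode.isAltCode (hX : IsPrefixCode X) (hY : IsPrefixCode Y) (hXn : X.Nonempty)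
    (hYn : Y.Nonempty) (hXe : [] ∉ X) (hYe : [] ∉ Y) : IsAltCode X Y :=
  ⟨hXn, hYn, hXe, hYe, fun _ _ _ _ hf hf' hsim =>
    eq_of_flatten_eq_of_isPrefixCode hX hY hXe hYe hf.2.2.1 hf'.2.2.1 hf.2.2.2 hf'.2.2.2
      (hf.2.1.trans hf'.2.1.symm) hsim.1⟩

theorem IsAltCode.eq_of_append_eq (h : IsAltCode X Y) {x x' y y' : List A} (hx : x ∈ X)
    (hxY : x ∉ Y) (hx' : x' ∈ X) (hx'Y : x' ∉ Y) (hy : y ∈ Y) (hy' : y' ∈ Y)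
    (e : x ++ y = x' ++ y') : x = x' := by
  have fact : ∀ {u v : List A}, u ∈ X → u ∉ Y → v ∈ Y → IsAltFact X Y [u, v] (u ++ v) :=
    fun hu huY hv => ⟨le_rfl, by simp, by simp [hu, hv],
      List.isChain_pair.2 ⟨fun _ => hv, fun h => absurd h huY⟩⟩
  have hw : x ++ y ≠ [] := fun h' => h.2.2.1 ((List.append_eq_nil_iff.1 h').1 ▸ hx)
  have := h.2.2.2.2 _ hw [x, y] [x', y'] (fact hx hxY hy) (e ▸ fact hx' hx'Y hy')
    ⟨Or.inl ⟨hx, hx'⟩, Or.inr ⟨hy, hy'⟩⟩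
  simp_all

theorem IsStrongAltCode.append_mem_left_iff (h : IsStrongAltCode X Y) {x y t : List A}
    (hx : x ∈ X) (hy : y ∈ Y) : x ++ t ∈ X ↔ t ++ y ∈ Y :=
  ⟨fun hxt => h.2.1 ⟨x, hx, by simpa using Language.append_mem_mul hxt hy⟩,
    fun hty => h.2.2 ⟨y, hy, by simpa using Language.append_mem_mul hx hty⟩⟩

theorem IsStrongAltCode.eq_nil_of_append_mem (h : IsStrongAltCode X Y) (hY : IsPrefixCode Y)
    {x y t : List A} (hx : x ∈ X) (hy : y ∈ Y) (hxt : x ++ t ∈ X) : t = [] := by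
  have hty : t ++ y ∈ Y := (h.append_mem_left_iff hx hy).1 hxt
  have hxtt : x ++ (t ++ t) ∈ X := by simpa using (h.append_mem_left_iff hxt hy).2 hty
  have htty : t ++ t ++ y ∈ Y := (h.append_mem_left_iff hx hy).1 hxtt
  have hYext : ∀ {u s : List A}, u ∈ Y → u ++ s ∈ Y → s = [] := fun {u s} hu hus => by
    simpa using hY u hu _ hus (List.prefix_append _ _)
  by_cases hxY : x ∈ Y
  · by_cases hxtY : x ++ t ∈ Y
    · exact hYext hxY hxtY
    by_cases hxttY : x ++ (t ++ t) ∈ Y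
    · simpa using hYext hxY hxttY
    simpa using h.1.eq_of_append_eq hxt hxtY hxtt hxttY hty hy (by simp)
  · by_cases hxtY : x ++ t ∈ Y
    · by_cases hxttY : x ++ (t ++ t) ∈ Y
      · exact hYext hxtY (by simpa using hxttY)
      simpa using h.1.eq_of_append_eq hx hxY hxtt hxttY htty hy (by simp)
    simpa using h.1.eq_of_append_eq hx hxY hxt hxtY hty hy (by simp)

theorem IsStrongAltCode.isPrefixCode_left (h : IsStrongAltCode X Y) (hY : IsPrefixCode Y) :
    IsPrefixCode X := by
  rintro u hu _ hv ⟨t, rfl⟩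
  obtain ⟨y, hy⟩ := h.1.2.1
  simp [h.eq_nil_of_append_mem hY hu hy hv]

theorem IsStrongAltCode.isSuffixCode_right (h : IsStrongAltCode X Y) (hY : IsPrefixCode Y) :
    IsSuffixCode Y := by
  rintro u hu _ hv ⟨t, rfl⟩
  obtain ⟨x, hx⟩ := h.1.1
  simp [h.eq_nil_of_append_mem hY hx hu ((h.append_mem_left_iff hx hu).2 hv)]

theorem IsStrongAltCode.mul_left (h : IsStrongAltCode X Y) (hXY : IsPrefixCode (X * Y))
    (hZ : IsPrefixCode Z) (hZn : Z.Nonempty) (hZe : [] ∉ Z) : IsStrongAltCode (Z * X) Y := by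
  have hY : IsPrefixCode Y := hXY.of_mul_right h.1.1
  have hX : IsPrefixCode X := h.isPrefixCode_left hY
  have hYs : IsSuffixCode Y := h.isSuffixCode_right hY
  obtain ⟨⟨⟨x, hx⟩, hYn, -, hYe, -⟩, hquot, -⟩ := h
  obtain ⟨z, hz⟩ := hZn
  refine ⟨(hZ.mul hX).isAltCode hY ⟨z ++ x, Language.append_mem_mul hz hx⟩ hYn
    (Language.nil_not_mem_mul_of_left hZe) hYe, ?_, ?_⟩
  · rintro u ⟨_, hzx, hzxu⟩
    obtain ⟨z, hz, x, hx, rfl⟩ := Language.mem_mul.1 hzx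
    obtain ⟨_, hzx', y, hy, e⟩ := Language.mem_mul.1 hzxu
    obtain ⟨z', hz', x', hx', rfl⟩ := Language.mem_mul.1 hzx'
    obtain rfl := hZ.eq_of_append_eq hz' hz (by simpa using e)
    exact hquot ⟨x, hx, Language.mem_mul.2 ⟨x', hx', y, hy, by simpa using e⟩⟩
  · rintro u ⟨y, hy, huy⟩
    obtain ⟨v, hv, y', hy', e⟩ := Language.mem_mul.1 huy
    obtain rfl := hYs.eq_of_append_eq hy' hy e
    exact List.append_cancel_right e ▸ hv

theorem IsStrongAltInduced.nonempty (h : IsStrongAltInduced Z) : Z.Nonempty := by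
  obtain ⟨X, Y, ⟨⟨⟨x, hx⟩, ⟨y, hy⟩, -⟩, -⟩, rfl⟩ := h
  exact ⟨x ++ y, Language.append_mem_mul hx hy⟩

theorem IsStrongAltInduced.nil_not_mem (h : IsStrongAltInduced Z) : [] ∉ Z := by
  obtain ⟨X, Y, ⟨⟨-, -, hXe, -⟩, -⟩, rfl⟩ := h
  exact Language.nil_not_mem_mul_of_left hXe

theorem IsStrongAltInduced.mul_left {Z' : Language A} (hZ' : IsStrongAltInduced Z')
    (hZ'p : IsPrefixCode Z') (hZ : IsPrefixCode Z) (hZn : Z.Nonempty) (hZe : [] ∉ Z) :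
    IsStrongAltInduced (Z * Z') := by
  obtain ⟨X, Y, h, rfl⟩ := hZ'
  exact ⟨Z * X, Y, h.mul_left hZ'p hZ hZn hZe, (mul_assoc Z X Y).symm⟩

theorem strongAltInduced_mul_pSubinfixCode_general {A : Type} (Z Z' : Language A)
    (hZ : IsStrongAltInduced Z) (hZ' : IsStrongAltInduced Z')
    (h1 : IsPSubinfixCode Z) (h2 : IsPSubinfixCode Z') :
    IsStrongAltInduced (Z * Z') ∧ IsPSubinfixCode (Z * Z') :=
  ⟨hZ'.mul_left h2.isPrefixCode h1.isPrefixCode hZ.nonempty hZ.nil_not_mem, h1.mul h2⟩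

/-- the product of two p-subinfix strong alt-induced codes is a
p-subinfix strong alt-induced code. -/
theorem strongAltInduced_mul_pSubinfixCode {A : Type} [Fintype A] (Z Z' : Language A)
    (hZ : IsStrongAltInduced Z) (hZ' : IsStrongAltInduced Z')
    (h1 : IsPSubinfixCode Z) (h2 : IsPSubinfixCode Z') :
    IsStrongAltInduced (Z * Z') ∧ IsPSubinfixCode (Z * Z') :=
  strongAltInduced_mul_pSubinfixCode_general Z Z' hZ hZ' h1 h2
end

section
/- Let A be a finite alphabet. If Z and Z' are strong alt-induced codes over A that are both subinfix codes, then the product ZZ' is a strong alt-induced code that is a subinfix code. -/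
/-!
A subinfix code is in particular a bifix code, and `(Z, Z')` itself is a strong alternative
code whenever `Z` is a prefix code and `Z'` a bifix code: two alternating factorizations
starting in the same set must agree word by word because both sets are prefix codes, while the
two quotient conditions are the prefix property of `Z` and the suffix property of `Z'`.
For the subinfix property, a subword `z₁w₁` of a proper infix `q₁q₂` of `z₂w₂`, with `z₁` a
subword of `q₁` and `w₁` a subword of `q₂`, makes `z₁` a subword of a proper infix of `z₂` or
`w₁` a subword of a proper infix of `w₂`.
-/

section

variable {A : Type}

namespace List

theorem IsInfix.length_lt_of_ne {p v : List A} (hp : p <:+: v) (hne : p ≠ v) :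
    p.length < v.length :=
  lt_of_le_of_ne hp.length_le fun h => hne (hp.eq_of_length h)

theorem properInfix_left_or_properInfix_right_of_append {q₁ q₂ z w : List A}
    (h : q₁ ++ q₂ <:+: z ++ w) (hne : q₁ ++ q₂ ≠ z ++ w) :
    (q₁ <:+: z ∧ q₁ ≠ z) ∨ (q₂ <:+: w ∧ q₂ ≠ w) := by
  obtain ⟨a, b, hab⟩ := h
  have hlen : a.length + q₁.length + q₂.length + b.length = z.length + w.length := by
    simpa [add_assoc] using congrArg length hab
  by_cases hc : a.length + q₁.length ≤ z.length
  · have hq₁ : a ++ q₁ <+: z :=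
      prefix_of_prefix_length_le ⟨q₂ ++ b, by simpa using hab⟩ (prefix_append z w)
        (by simpa using hc)
    by_cases hq₁z : q₁ = z
    · subst hq₁z
      have ha : a = [] := by simpa using hq₁.length_le
      subst ha
      have hw : q₂ ++ b = w := by simpa using hab
      exact Or.inr ⟨⟨[], b, hw⟩, fun h => hne (by rw [h])⟩
    · exact Or.inl ⟨(suffix_append a q₁).isInfix.trans hq₁.isInfix, hq₁z⟩
  · have hq₂ : q₂ ++ b <:+ w :=
      suffix_of_suffix_length_le ⟨a ++ q₁, by simpa using hab⟩ (suffix_append z w)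
        (by simp only [length_append]; omega)
    refine Or.inr ⟨(prefix_append q₂ b).isInfix.trans hq₂.isInfix, fun h => ?_⟩
    subst h
    have hle := hq₂.length_le
    rw [length_append] at hle
    omega

end List

theorem IsPrefixCode.eq_of_prefix_of_prefix {X : Language A} (hX : IsPrefixCode X)
    {u v w : List A} (hu : u ∈ X) (hv : v ∈ X) (huw : u <+: w) (hvw : v <+: w) : u = v := by
  rcases le_total u.length v.length with h | h
  · exact hX u hu v hv (List.prefix_of_prefix_length_le huw hvw h)
  · exact (hX v hv u hu (List.prefix_of_prefix_length_le hvw huw h)).symm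

theorem IsSuffixCode.eq_of_suffix_of_suffix {X : Language A} (hX : IsSuffixCode X)
    {u v w : List A} (hu : u ∈ X) (hv : v ∈ X) (huw : u <:+ w) (hvw : v <:+ w) : u = v := by
  rcases le_total u.length v.length with h | h
  · exact hX u hu v hv (List.suffix_of_suffix_length_le huw hvw h)
  · exact (hX v hv u hu (List.suffix_of_suffix_length_le hvw huw h)).symm

namespace IsSubinfixCode

variable {X : Language A}

theorem not_sublist (hX : IsSubinfixCode X) {u v p : List A} (hu : u ∈ X) (hv : v ∈ X)
    (hp : p <:+: v) (hne : p ≠ v) : ¬ u.Sublist p := by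
  intro hup
  obtain rfl | huv := eq_or_ne u v
  · exact (hup.length_le.trans_lt (hp.length_lt_of_ne hne)).false
  · exact hX u hu v hv huv p hp hne hup

theorem isPrefixCode (hX : IsSubinfixCode X) : IsPrefixCode X :=
  fun u hu _ hv huv => by_contra fun hne => hX.not_sublist hu hv huv.isInfix hne (.refl u)

theorem isSuffixCode (hX : IsSubinfixCode X) : IsSuffixCode X :=
  fun u hu _ hv huv => by_contra fun hne => hX.not_sublist hu hv huv.isInfix hne (.refl u)

theorem isBifixCode (hX : IsSubinfixCode X) : IsBifixCode X :=
  ⟨hX.isPrefixCode, hX.isSuffixCode⟩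

theorem mul {Y : Language A} (hX : IsSubinfixCode X) (hY : IsSubinfixCode Y) :
    IsSubinfixCode (X * Y) := by
  rintro _ hu _ hv - p hp hne hsub
  obtain ⟨x₁, hx₁, y₁, hy₁, rfl⟩ := Language.mem_mul.mp hu
  obtain ⟨x₂, hx₂, y₂, hy₂, rfl⟩ := Language.mem_mul.mp hv
  obtain ⟨q₁, q₂, rfl, hxq, hyq⟩ := List.append_sublist_iff.mp hsub
  rcases List.properInfix_left_or_properInfix_right_of_append hp hne with ⟨hq, hqne⟩ | ⟨hq, hqne⟩
  · exact hX.not_sublist hx₁ hx₂ hq hqne hxq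
  · exact hY.not_sublist hy₁ hy₂ hq hqne hyq

end IsSubinfixCode

def IsAltList (X Y : Language A) : List (List A) → Prop
  | [] => True
  | u :: l => u ∈ X ∧ IsAltList Y X l

theorem isAltList_of_chain {X Y : Language A} :
    ∀ {l : List (List A)}, l.IsChain (fun u v => (u ∈ X → v ∈ Y) ∧ (u ∈ Y → v ∈ X)) →
      l.headI ∈ X → IsAltList X Y l
  | [], _, _ => trivial
  | [u], _, hu => ⟨hu, trivial⟩
  | u :: _ :: _, hc, hu => by
    rw [List.isChain_cons_cons] at hc
    exact ⟨hu, isAltList_of_chain (hc.2.imp fun _ _ h => h.symm) (hc.1.1 hu)⟩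

theorem IsAltList.eq_of_flatten_eq {X Y : Language A} (hX : IsPrefixCode X)
    (hY : IsPrefixCode Y) (hXnil : [] ∉ X) (hYnil : [] ∉ Y) :
    ∀ {l l' : List (List A)}, IsAltList X Y l → IsAltList X Y l' →
      l.flatten = l'.flatten → l = l'
  | [], [], _, _, _ => rfl
  | [], u :: _, _, ⟨hu, _⟩, h => by
    simp only [List.flatten_nil, List.flatten_cons, List.nil_eq, List.append_eq_nil_iff] at h
    exact absurd (h.1 ▸ hu) hXnil
  | u :: _, [], ⟨hu, _⟩, _, h => by
    simp only [List.flatten_nil, List.flatten_cons, List.append_eq_nil_iff] at h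
    exact absurd (h.1 ▸ hu) hXnil
  | u :: l, u' :: l', ⟨hu, hl⟩, ⟨hu', hl'⟩, h => by
    simp only [List.flatten_cons] at h
    obtain rfl : u = u' := hX.eq_of_prefix_of_prefix hu hu' (List.prefix_append u _)
      (h ▸ List.prefix_append u' _)
    rw [IsAltList.eq_of_flatten_eq hY hX hYnil hXnil hl hl' (List.append_cancel_left h)]

theorem IsAltFact.symm {X Y : Language A} {l : List (List A)} {w : List A}
    (h : IsAltFact X Y l w) : IsAltFact Y X l w :=
  ⟨h.1, h.2.1, fun u hu => (h.2.2.1 u hu).symm, h.2.2.2.imp fun _ _ h => h.symm⟩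

theorem IsAltFact.eq_of_headI_mem {X Y : Language A} (hX : IsPrefixCode X)
    (hY : IsPrefixCode Y) (hXnil : [] ∉ X) (hYnil : [] ∉ Y) {l l' : List (List A)}
    {w : List A} (hl : IsAltFact X Y l w) (hl' : IsAltFact X Y l' w) (h : l.headI ∈ X)
    (h' : l'.headI ∈ X) : l = l' :=
  IsAltList.eq_of_flatten_eq hX hY hXnil hYnil (isAltList_of_chain hl.2.2.2 h)
    (isAltList_of_chain hl'.2.2.2 h') (hl.2.1.trans hl'.2.1.symm)

theorem isAltCode_of_isPrefixCode {X Y : Language A} (hXne : X.Nonempty) (hYne : Y.Nonempty)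
    (hXnil : [] ∉ X) (hYnil : [] ∉ Y) (hX : IsPrefixCode X) (hY : IsPrefixCode Y) :
    IsAltCode X Y := by
  refine ⟨hXne, hYne, hXnil, hYnil, fun w _ l l' hl hl' hsim => ?_⟩
  rcases hsim.1 with ⟨h, h'⟩ | ⟨h, h'⟩
  · exact hl.eq_of_headI_mem hX hY hXnil hYnil hl' h h'
  · exact hl.symm.eq_of_headI_mem hY hX hYnil hXnil hl'.symm h h'

theorem IsPrefixCode.leftQuotient_mul_subset {X : Language A} (hX : IsPrefixCode X)
    (Y : Language A) : {u : List A | ∃ x ∈ X, x ++ u ∈ X * Y} ⊆ Y := by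
  rintro u ⟨x, hx, hxu⟩
  obtain ⟨x', hx', y, hy, h⟩ := Language.mem_mul.mp hxu
  obtain rfl : x' = x := hX.eq_of_prefix_of_prefix hx' hx ⟨y, h⟩ (List.prefix_append x u)
  exact List.append_cancel_left h ▸ hy

theorem IsSuffixCode.rightQuotient_mul_subset {Y : Language A} (hY : IsSuffixCode Y)
    (X : Language A) : {u : List A | ∃ y ∈ Y, u ++ y ∈ X * Y} ⊆ X := by
  rintro u ⟨y, hy, huy⟩
  obtain ⟨x, hx, y', hy', h⟩ := Language.mem_mul.mp huy
  obtain rfl : y' = y := hY.eq_of_suffix_of_suffix hy' hy ⟨x, h⟩ (List.suffix_append u y)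
  exact List.append_cancel_right h ▸ hx

theorem isStrongAltCode_of_isPrefixCode_of_isBifixCode {X Y : Language A} (hXne : X.Nonempty)
    (hYne : Y.Nonempty) (hXnil : [] ∉ X) (hYnil : [] ∉ Y) (hX : IsPrefixCode X)
    (hY : IsBifixCode Y) : IsStrongAltCode X Y :=
  ⟨isAltCode_of_isPrefixCode hXne hYne hXnil hYnil hX hY.1, hX.leftQuotient_mul_subset Y,
    hY.2.rightQuotient_mul_subset X⟩

namespace IsStrongAltInduced

variable {Z : Language A}

theorem nonempty_s11 (hZ : IsStrongAltInduced Z) : Z.Nonempty := by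
  obtain ⟨X, Y, ⟨⟨⟨x, hx⟩, ⟨y, hy⟩, -⟩, -⟩, rfl⟩ := hZ
  exact ⟨x ++ y, Language.append_mem_mul hx hy⟩

theorem nil_notMem (hZ : IsStrongAltInduced Z) : [] ∉ Z := by
  obtain ⟨X, Y, ⟨⟨-, -, hXnil, -⟩, -⟩, rfl⟩ := hZ
  intro h
  obtain ⟨x, hx, y, -, hxy⟩ := Language.mem_mul.mp h
  exact hXnil ((List.append_eq_nil_iff.mp hxy).1 ▸ hx)

end IsStrongAltInduced

end

theorem strongAltInduced_mul_subinfixCode_general {A : Type} (Z Z' : Language A)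
    (hZ : IsStrongAltInduced Z) (hZ' : IsStrongAltInduced Z')
    (h1 : IsSubinfixCode Z) (h2 : IsSubinfixCode Z') :
    IsStrongAltInduced (Z * Z') ∧ IsSubinfixCode (Z * Z') :=
  ⟨⟨Z, Z', isStrongAltCode_of_isPrefixCode_of_isBifixCode hZ.nonempty_s11 hZ'.nonempty_s11
      hZ.nil_notMem hZ'.nil_notMem h1.isPrefixCode h2.isBifixCode, rfl⟩, h1.mul h2⟩

/-- the product of two subinfix strong alt-induced codes is a
subinfix strong alt-induced code. -/
theorem strongAltInduced_mul_subinfixCode {A : Type} [Fintype A] (Z Z' : Language A)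
    (hZ : IsStrongAltInduced Z) (hZ' : IsStrongAltInduced Z')
    (h1 : IsSubinfixCode Z) (h2 : IsSubinfixCode Z') :
    IsStrongAltInduced (Z * Z') ∧ IsSubinfixCode (Z * Z') :=
  strongAltInduced_mul_subinfixCode_general Z Z' hZ hZ' h1 h2
end

section
/- Let A be a finite alphabet. If Z and Z' are strong alt-induced codes over A that are both hypercodes, then the product ZZ' is a strong alt-induced code that is a hypercode. -/
/-- Stripping lemma for alternating factorizations. -/
theorem strip_aux {A : Type} {Z Z' : Language A}
    (hZ : ∀ u ∈ Z, ∀ v ∈ Z, u <+: v → u = v)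
    (hZ' : ∀ u ∈ Z', ∀ v ∈ Z', u <+: v → u = v)
    (h0 : [] ∉ Z) (h0' : [] ∉ Z') :
    ∀ l l' : List (List A), (∀ u ∈ l, u ∈ Z ∨ u ∈ Z') → (∀ u ∈ l', u ∈ Z ∨ u ∈ Z') →
      l.Chain' (fun u v => (u ∈ Z → v ∈ Z') ∧ (u ∈ Z' → v ∈ Z)) →
      l'.Chain' (fun u v => (u ∈ Z → v ∈ Z') ∧ (u ∈ Z' → v ∈ Z)) →
      l.flatten = l'.flatten →
      (l = [] ∨ l' = [] ∨ (l.headI ∈ Z ∧ l'.headI ∈ Z) ∨ (l.headI ∈ Z' ∧ l'.headI ∈ Z')) →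
      l = l'
  | [], [], _, _, _, _, _, _ => rfl
  | [], b :: t', _, hm', _, _, hf, _ => by
      exfalso
      simp only [List.flatten_nil, List.flatten_cons] at hf
      rcases List.append_eq_nil_iff.mp hf.symm with ⟨hb, _⟩
      rcases hm' b (by simp) with h | h
      · exact h0 (hb ▸ h)
      · exact h0' (hb ▸ h)
  | a :: t, [], hm, _, _, _, hf, _ => by
      exfalso
      simp only [List.flatten_nil, List.flatten_cons] at hf
      rcases List.append_eq_nil_iff.mp hf with ⟨hb, _⟩
      rcases hm a (by simp) with h | h
      · exact h0 (hb ▸ h)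
      · exact h0' (hb ▸ h)
  | a :: t, b :: t', hm, hm', hc, hc', hf, hh => by
      have hhead : (a ∈ Z ∧ b ∈ Z) ∨ (a ∈ Z' ∧ b ∈ Z') := by
        rcases hh with h | h | h | h
        · exact absurd h (by simp)
        · exact absurd h (by simp)
        · exact Or.inl h
        · exact Or.inr h
      simp only [List.flatten_cons] at hf
      have hab : a = b := by
        have hpa : a <+: (b ++ t'.flatten) := hf ▸ List.prefix_append a t.flatten
        have hpb : b <+: (b ++ t'.flatten) := List.prefix_append b t'.flatten
        rcases List.prefix_or_prefix_of_prefix hpa hpb with h | h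
        · rcases hhead with ⟨ha, hb⟩ | ⟨ha, hb⟩
          · exact hZ a ha b hb h
          · exact hZ' a ha b hb h
        · rcases hhead with ⟨ha, hb⟩ | ⟨ha, hb⟩
          · exact (hZ b hb a ha h).symm
          · exact (hZ' b hb a ha h).symm
      subst hab
      have hft : t.flatten = t'.flatten := by
        exact List.append_cancel_left hf
      have htt : t = t' := by
        apply strip_aux hZ hZ' h0 h0' t t'
          (fun u hu => hm u (List.mem_cons_of_mem _ hu))
          (fun u hu => hm' u (List.mem_cons_of_mem _ hu))
          hc.tail hc'.tail hft
        rcases t with _ | ⟨c, t2⟩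
        · exact Or.inl rfl
        rcases t' with _ | ⟨c', t2'⟩
        · exact Or.inr (Or.inl rfl)
        right; right
        have hrc := (List.isChain_cons_cons.mp hc).1
        have hrc' := (List.isChain_cons_cons.mp hc').1
        rcases hhead with ⟨ha, _⟩ | ⟨ha, _⟩
        · exact Or.inr ⟨hrc.1 ha, hrc'.1 ha⟩
        · exact Or.inl ⟨hrc.2 ha, hrc'.2 ha⟩
      rw [htt]

/-- the product of two hyper strong alt-induced codes is a
hyper strong alt-induced code. -/
theorem strongAltInduced_mul_hypercode {A : Type} [Fintype A] (Z Z' : Language A)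
    (hZ : IsStrongAltInduced Z) (hZ' : IsStrongAltInduced Z')
    (h1 : IsHypercode Z) (h2 : IsHypercode Z') :
    IsStrongAltInduced (Z * Z') ∧ IsHypercode (Z * Z') := by
  -- basic facts about Z and Z'
  obtain ⟨X, Y, ⟨⟨⟨x, hx⟩, ⟨y, hy⟩, hX0, hY0, -⟩, -, -⟩, hZeq⟩ := hZ
  obtain ⟨X', Y', ⟨⟨⟨x', hx'⟩, ⟨y', hy'⟩, hX0', hY0', -⟩, -, -⟩, hZeq'⟩ := hZ'
  have hZne : Z.Nonempty := ⟨x ++ y, hZeq ▸ Language.mem_mul.mpr ⟨x, hx, y, hy, rfl⟩⟩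
  have hZ'ne : Z'.Nonempty := ⟨x' ++ y', hZeq' ▸ Language.mem_mul.mpr ⟨x', hx', y', hy', rfl⟩⟩
  have hZ0 : [] ∉ Z := by
    intro h
    rw [hZeq, Language.mem_mul] at h
    obtain ⟨a, ha, b, hb, hab⟩ := h
    rcases List.append_eq_nil_iff.mp hab with ⟨rfl, rfl⟩
    exact hX0 ha
  have hZ0' : [] ∉ Z' := by
    intro h
    rw [hZeq', Language.mem_mul] at h
    obtain ⟨a, ha, b, hb, hab⟩ := h
    rcases List.append_eq_nil_iff.mp hab with ⟨rfl, rfl⟩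
    exact hX0' ha
  have hpre : ∀ u ∈ Z, ∀ v ∈ Z, u <+: v → u = v :=
    fun u hu v hv h => h1 u hu v hv h.sublist
  have hpre' : ∀ u ∈ Z', ∀ v ∈ Z', u <+: v → u = v :=
    fun u hu v hv h => h2 u hu v hv h.sublist
  have hsuf : ∀ u ∈ Z, ∀ v ∈ Z, u <:+ v → u = v :=
    fun u hu v hv h => h1 u hu v hv h.sublist
  have hsuf' : ∀ u ∈ Z', ∀ v ∈ Z', u <:+ v → u = v :=
    fun u hu v hv h => h2 u hu v hv h.sublist
  constructor
  · refine ⟨Z, Z', ⟨⟨hZne, hZ'ne, hZ0, hZ0', ?_⟩, ?_, ?_⟩, rfl⟩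
    · -- uniqueness of similar alternating factorizations
      intro w _ l l' hl hl' hsim
      refine strip_aux hpre hpre' hZ0 hZ0' l l' hl.2.2.1 hl'.2.2.1 hl.2.2.2 hl'.2.2.2
        (hl.2.1.trans hl'.2.1.symm) ?_
      right; right
      exact hsim.1
    · -- Z⁻¹(ZZ') ⊆ Z'
      intro u hu
      obtain ⟨z, hz, hzu⟩ := hu
      rw [Language.mem_mul] at hzu
      obtain ⟨a, ha, b, hb, hab⟩ := hzu
      rcases List.append_eq_append_iff.mp hab with ⟨r, hr1, hr2⟩ | ⟨r, hr1, hr2⟩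
      · -- z = a ++ r, b = r ++ u
        have : a = z := hpre a ha z hz ⟨r, hr1.symm⟩
        subst this
        have hr : r = [] := by
          have := congrArg List.length hr1
          simp at this
          exact this
        subst hr
        simp only [List.nil_append] at hr2
        exact hr2 ▸ hb
      · -- a = z ++ r, u = r ++ b
        have : z = a := hpre z hz a ha ⟨r, hr1.symm⟩
        subst this
        have hr : r = [] := by
          have := congrArg List.length hr1
          simp at this
          exact this
        subst hr
        rw [List.nil_append] at hr2
        exact hr2 ▸ hb
    · -- (ZZ')Z'⁻¹ ⊆ Z
      intro u hu
      obtain ⟨z, hz, hzu⟩ := hu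
      rw [Language.mem_mul] at hzu
      obtain ⟨a, ha, b, hb, hab⟩ := hzu
      rcases List.append_eq_append_iff.mp hab with ⟨r, hr1, hr2⟩ | ⟨r, hr1, hr2⟩
      · -- u = a ++ r, b = r ++ z
        have : z = b := hsuf' z hz b hb ⟨r, hr2.symm⟩
        subst this
        have hr : r = [] := by
          have := congrArg List.length hr2
          simp at this
          exact this
        subst hr
        simp only [List.append_nil] at hr1
        exact hr1 ▸ ha
      · -- a = u ++ r, z = r ++ b
        have : b = z := hsuf' b hb z hz ⟨r, hr2.symm⟩
        subst this
        have hr : r = [] := by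
          have := congrArg List.length hr2
          simp at this
          exact this
        subst hr
        rw [List.append_nil] at hr1
        exact hr1 ▸ ha
  · -- hypercode
    intro u hu v hv hsub
    rw [Language.mem_mul] at hu hv
    obtain ⟨a1, ha1, b1, hb1, hu1⟩ := hu
    obtain ⟨a2, ha2, b2, hb2, hv1⟩ := hv
    subst hu1; subst hv1
    rw [List.sublist_append_iff] at hsub
    obtain ⟨u1, u2, heq, hs1, hs2⟩ := hsub
    rcases List.append_eq_append_iff.mp heq with ⟨r, hr1, hr2⟩ | ⟨r, hr1, hr2⟩
    · -- u1 = a1 ++ r, b1 = r ++ u2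
      have haa : a1 = a2 := h1 a1 ha1 a2 ha2 ((List.prefix_append a1 r).sublist.trans (hr1 ▸ hs1))
      have hr0 : r = [] := by
        have hlen1 : u1.length ≤ a2.length := hs1.length_le
        have hlen2 := congrArg List.length hr1
        rw [List.length_append, haa] at hlen2
        have : r.length = 0 := by omega
        exact List.eq_nil_of_length_eq_zero this
      subst hr0
      simp only [List.nil_append] at hr2
      have hbb : b1 = b2 := h2 b1 hb1 b2 hb2 (hr2 ▸ hs2)
      rw [haa, hbb]
    · -- a1 = u1 ++ r, u2 = r ++ b1
      have hbb : b1 = b2 := h2 b1 hb1 b2 hb2 ((List.suffix_append r b1).sublist.trans (hr2 ▸ hs2))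
      have hr0 : r = [] := by
        have hlen1 : u2.length ≤ b2.length := hs2.length_le
        have hlen2 := congrArg List.length hr2
        rw [List.length_append, hbb] at hlen2
        have : r.length = 0 := by omega
        exact List.eq_nil_of_length_eq_zero this
      subst hr0
      simp only [List.append_nil] at hr1
      have haa : a1 = a2 := h1 a1 ha1 a2 ha2 (hr1 ▸ hs1)
      rw [haa, hbb]
end

section
/- Let A be a finite alphabet. If Z and Z' are strong alt-induced codes over A each of which is a maximal prefix code, then the product ZZ' is a strong alt-induced code that is a maximal prefix code. -/
section StrongAltAux

variable {A : Type} {X Y Z Z' : Language A}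

/-- Split a two-sided factorization whose left parts lie in a prefix code. -/
theorem split_pref (hX : IsPrefixCode X) {u u' a b : List A}
    (hu : u ∈ X) (hu' : u' ∈ X) (h : u ++ a = u' ++ b) : u = u' ∧ a = b := by
  rcases List.prefix_or_prefix_of_prefix (⟨a, h⟩ : u <+: u' ++ b)
      (⟨b, rfl⟩ : u' <+: u' ++ b) with hc | hc
  · obtain rfl := hX u hu u' hu' hc
    exact ⟨rfl, List.append_cancel_left h⟩
  · obtain rfl := (hX u' hu' u hu hc).symm
    exact ⟨rfl, List.append_cancel_left h⟩

/-- Split a two-sided factorization whose right parts lie in a suffix code. -/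
theorem split_suf (hY : IsSuffixCode Y) {v v' a b : List A}
    (hv : v ∈ Y) (hv' : v' ∈ Y) (h : a ++ v = b ++ v') : v = v' ∧ a = b := by
  rcases List.suffix_or_suffix_of_suffix (⟨a, h⟩ : v <:+ b ++ v')
      (⟨b, rfl⟩ : v' <:+ b ++ v') with hc | hc
  · obtain rfl := hY v hv v' hv' hc
    exact ⟨rfl, List.append_cancel_right h⟩
  · obtain rfl := (hY v' hv' v hv hc).symm
    exact ⟨rfl, List.append_cancel_right h⟩

theorem altFact_pair {a b : List A} (hab : (a ∈ X ∨ a ∈ Y) ∧ (b ∈ X ∨ b ∈ Y))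
    (h1 : a ∈ X → b ∈ Y) (h2 : a ∈ Y → b ∈ X) : IsAltFact X Y [a, b] (a ++ b) := by
  refine ⟨by simp, by simp, ?_, ?_⟩
  · intro u hu
    rcases List.mem_cons.mp hu with rfl | hu
    · exact hab.1
    · rcases List.mem_cons.mp hu with rfl | hu
      · exact hab.2
      · simp at hu
  · exact List.isChain_pair.mpr ⟨h1, h2⟩

/-- From an alternative code, two "length two" similar factorizations of a word coincide. -/
theorem pair_eq (hAC : IsAltCode X Y) {a₁ b₁ a₂ b₂ : List A}
    (ha₁ : a₁ ∈ X) (hb₁ : b₁ ∈ Y) (ha₂ : a₂ ∈ X) (hb₂ : b₂ ∈ Y)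
    (h₁ : a₁ ∈ Y → b₁ ∈ X) (h₂ : a₂ ∈ Y → b₂ ∈ X)
    (hw : a₁ ++ b₁ = a₂ ++ b₂) : a₁ = a₂ ∧ b₁ = b₂ := by
  obtain ⟨-, -, hXe, -, huniq⟩ := hAC
  have hane : a₁ ≠ [] := fun h => hXe (h ▸ ha₁)
  have hne : a₁ ++ b₁ ≠ [] := fun h => hane (List.append_eq_nil_iff.mp h).1
  have := huniq (a₁ ++ b₁) hne [a₁, b₁] [a₂, b₂]
    (altFact_pair ⟨Or.inl ha₁, Or.inr hb₁⟩ (fun _ => hb₁) h₁)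
    (hw ▸ altFact_pair ⟨Or.inl ha₂, Or.inr hb₂⟩ (fun _ => hb₂) h₂)
    ⟨Or.inl ⟨ha₁, ha₂⟩, Or.inr ⟨hb₁, hb₂⟩⟩
  simpa using this

/-- Claim A: for a strong alternative code `(X, Y)` with `XY` a prefix code,
`X` is a prefix code. -/
theorem claimA (hS : IsStrongAltCode X Y) (hP : IsPrefixCode (X * Y)) :
    IsPrefixCode X := by
  obtain ⟨hAC, hC1, hC2⟩ := hS
  obtain ⟨hXne, hYne, hXe, hYe, huniq⟩ := hAC
  intro u hu v hv hpre
  obtain ⟨t, rfl⟩ := hpre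
  rcases eq_or_ne t [] with rfl | ht
  · simp
  exfalso
  obtain ⟨y₀, hy₀⟩ := hYne
  have hty : ∀ y ∈ Y, t ++ y ∈ Y := fun y hy =>
    hC1 ⟨u, hu, by rw [← List.append_assoc]; exact Language.append_mem_mul hv hy⟩
  -- helper: if x ∉ Y, x ∈ X, x ++ t ∈ X then contradiction
  have key : ∀ x : List A, x ∈ X → x ++ t ∈ X → x ∉ Y → False := by
    intro x hx hxt hxY
    by_cases hxtY : x ++ t ∈ Y
    · have h := pair_eq ⟨hXne, ⟨y₀, hy₀⟩, hXe, hYe, huniq⟩ hx (hty _ hxtY) hxt hxtY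
        (fun h => absurd h hxY) (fun _ => hxt) (by simp)
      have := h.1
      simp at this
      exact ht this
    · have h := pair_eq ⟨hXne, ⟨y₀, hy₀⟩, hXe, hYe, huniq⟩ hx (hty _ hy₀) hxt hy₀
        (fun h => absurd h hxY) (fun h => absurd h hxtY) (by simp)
      have := h.1
      simp at this
      exact ht this
  by_cases huY : u ∈ Y
  · by_cases hvY : u ++ t ∈ Y
    · -- prefix trick inside XY
      have p₁ : u ++ u ∈ X * Y := Language.append_mem_mul hu huY
      have p₂ : u ++ (u ++ t) ∈ X * Y := Language.append_mem_mul hu hvY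
      have := hP _ p₁ _ p₂ ⟨t, by simp⟩
      have h' : t = [] := by
        have := List.append_cancel_left this
        simpa using this
      exact ht h'
    · -- derive (u ++ t) ++ t ∈ X and recurse into key
      have htu : t ++ u ∈ Y := hty u huY
      have hutt : (u ++ t) ++ t ∈ X := hC2 ⟨u, huY, by
        have : (u ++ t) ++ (t ++ u) ∈ X * Y := Language.append_mem_mul hv htu
        simpa [List.append_assoc] using this⟩
      exact key (u ++ t) hv (by simpa [List.append_assoc] using hutt) hvY
  · exact key u hu hv huY

/-- Claim B: for a strong alternative code `(X, Y)` with `XY` a prefix code,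
`Y` is a suffix code. -/
theorem claimB (hS : IsStrongAltCode X Y) (hP : IsPrefixCode (X * Y)) :
    IsSuffixCode Y := by
  obtain ⟨hAC, hC1, hC2⟩ := hS
  obtain ⟨hXne, hYne, hXe, hYe, huniq⟩ := hAC
  intro u hu v hv hsuf
  obtain ⟨s, rfl⟩ := hsuf
  rcases eq_or_ne s [] with rfl | hs
  · simp
  exfalso
  obtain ⟨x₀, hx₀⟩ := hXne
  have hxs : ∀ x ∈ X, x ++ s ∈ X := fun x hx =>
    hC2 ⟨u, hu, by rw [List.append_assoc]; exact Language.append_mem_mul hx hv⟩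
  have hx₁ : x₀ ++ s ∈ X := hxs _ hx₀
  have hx₂ : (x₀ ++ s) ++ s ∈ X := hxs _ hx₁
  -- helper: x ∈ X, x ∉ Y, x ++ s ∈ X ∩ Y gives a contradiction
  have key : ∀ x : List A, x ∈ X → x ∉ Y → x ++ s ∈ X → x ++ s ∈ Y → False := by
    intro x hx hxY hxsX hxsY
    have hsxs : s ++ (x ++ s) ∈ Y := hC1 ⟨x, hx, by
      have : (x ++ s) ++ (x ++ s) ∈ X * Y := Language.append_mem_mul hxsX hxsY
      simpa [List.append_assoc] using this⟩
    have h := pair_eq ⟨⟨x₀, hx₀⟩, hYne, hXe, hYe, huniq⟩ hx hsxs hxsX hxsY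
      (fun h => absurd h hxY) (fun _ => hxsX) (by simp)
    have := h.1
    simp at this
    exact hs this
  by_cases h1 : x₀ ++ s ∈ Y
  · by_cases h0 : x₀ ∈ Y
    · -- prefix trick
      have p₁ : x₀ ++ x₀ ∈ X * Y := Language.append_mem_mul hx₀ h0
      have p₂ : x₀ ++ (x₀ ++ s) ∈ X * Y := Language.append_mem_mul hx₀ h1
      have := hP _ p₁ _ p₂ ⟨s, by simp⟩
      have h' : s = [] := by
        have := List.append_cancel_left this
        simpa using this
      exact hs h'
    · exact key x₀ hx₀ h0 hx₁ h1
  · by_cases h2 : (x₀ ++ s) ++ s ∈ Y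
    · exact key (x₀ ++ s) hx₁ h1 hx₂ h2
    · have h := pair_eq ⟨⟨x₀, hx₀⟩, hYne, hXe, hYe, huniq⟩ hx₂ hu hx₁ hv
        (fun h => absurd h h2) (fun h => absurd h h1) (by simp)
      have := h.1
      simp at this
      exact hs this

/-- Uniqueness of alternating factorizations when both `X` and `Y` are prefix codes. -/
theorem facts_eq (hX : IsPrefixCode X) (hY : IsPrefixCode Y)
    (hXe : [] ∉ X) (hYe : [] ∉ Y) :
    ∀ l l' : List (List A), (∀ u ∈ l, u ∈ X ∨ u ∈ Y) → (∀ u ∈ l', u ∈ X ∨ u ∈ Y) →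
      l.Chain' (fun u v => (u ∈ X → v ∈ Y) ∧ (u ∈ Y → v ∈ X)) →
      l'.Chain' (fun u v => (u ∈ X → v ∈ Y) ∧ (u ∈ Y → v ∈ X)) →
      l.flatten = l'.flatten →
      (l ≠ [] → l' ≠ [] →
        ((l.headI ∈ X ∧ l'.headI ∈ X) ∨ (l.headI ∈ Y ∧ l'.headI ∈ Y))) →
      l = l' := by
  intro l
  induction l with
  | nil =>
    intro l' _ hm' _ _ hf _
    cases l' with
    | nil => rfl
    | cons a t =>
      exfalso
      have hfa : a ++ t.flatten = [] := by
        simpa only [List.flatten_cons, List.flatten_nil] using hf.symm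
      have ha : a = [] := (List.append_eq_nil_iff.mp hfa).1
      rcases hm' a (by simp) with h | h
      · exact hXe (ha ▸ h)
      · exact hYe (ha ▸ h)
  | cons a t ih =>
    intro l' hm hm' hc hc' hf hh
    cases l' with
    | nil =>
      exfalso
      have hfa : a ++ t.flatten = [] := by
        simpa only [List.flatten_cons, List.flatten_nil] using hf
      have ha : a = [] := (List.append_eq_nil_iff.mp hfa).1
      rcases hm a (by simp) with h | h
      · exact hXe (ha ▸ h)
      · exact hYe (ha ▸ h)
    | cons a' t' =>
      have hf' : a ++ t.flatten = a' ++ t'.flatten := by simpa using hf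
      have hh' := hh (by simp) (by simp)
      simp only [List.headI] at hh'
      have heq : a = a' ∧ t.flatten = t'.flatten := by
        rcases hh' with ⟨haX, ha'X⟩ | ⟨haY, ha'Y⟩
        · exact split_pref hX haX ha'X hf'
        · exact split_pref hY haY ha'Y hf'
      obtain ⟨rfl, hft⟩ := heq
      have ht : t = t' := by
        refine ih t' (fun u hu => hm u (by simp [hu])) (fun u hu => hm' u (by simp [hu]))
          hc.tail hc'.tail hft ?_
        intro htne ht'ne
        cases t with
        | nil => exact absurd rfl htne
        | cons v s =>
          cases t' with
          | nil => exact absurd rfl ht'ne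
          | cons v' s' =>
            have Rav : (a ∈ X → v ∈ Y) ∧ (a ∈ Y → v ∈ X) := (List.isChain_cons_cons.mp hc).1
            have Rav' : (a ∈ X → v' ∈ Y) ∧ (a ∈ Y → v' ∈ X) := (List.isChain_cons_cons.mp hc').1
            rcases hh' with ⟨haX, ha'X⟩ | ⟨haY, ha'Y⟩
            · exact Or.inr ⟨Rav.1 haX, Rav'.1 ha'X⟩
            · exact Or.inl ⟨Rav.2 haY, Rav'.2 ha'Y⟩
      rw [ht]

theorem altCode_of_prefixCodes (hX : IsPrefixCode X) (hY : IsPrefixCode Y)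
    (hXne : X.Nonempty) (hYne : Y.Nonempty) (hXe : [] ∉ X) (hYe : [] ∉ Y) :
    IsAltCode X Y := by
  refine ⟨hXne, hYne, hXe, hYe, ?_⟩
  intro w hw l l' hl hl' hsim
  obtain ⟨-, hfl, hm, hc⟩ := hl
  obtain ⟨-, hfl', hm', hc'⟩ := hl'
  exact facts_eq hX hY hXe hYe l l' hm hm' hc hc' (hfl.trans hfl'.symm)
    (fun _ _ => hsim.1)

/-- The product of two prefix codes is a prefix code. -/
theorem prefixCode_mul (hZ : IsPrefixCode Z) (hZ' : IsPrefixCode Z') :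
    IsPrefixCode (Z * Z') := by
  intro w hw v hv hp
  obtain ⟨z₁, hz₁, z₁', hz₁', rfl⟩ := Language.mem_mul.mp hw
  obtain ⟨z₂, hz₂, z₂', hz₂', rfl⟩ := Language.mem_mul.mp hv
  obtain ⟨r, hr⟩ := hp
  have h : z₁ ++ (z₁' ++ r) = z₂ ++ z₂' := by simpa [List.append_assoc] using hr
  obtain ⟨rfl, h2⟩ := split_pref hZ hz₁ hz₂ h
  obtain rfl := hZ' z₁' hz₁' z₂' hz₂' ⟨r, h2⟩
  rfl

/-- A maximal prefix code is "right complete": every word is prefix-comparable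
with an element of the code. -/
theorem comparable_of_max (h : IsMaxPrefixCode Z) (hne : Z.Nonempty) (w : List A) :
    ∃ z ∈ Z, z <+: w ∨ w <+: z := by
  by_cases hnil : [] ∈ Z
  · exact ⟨[], hnil, Or.inl (List.nil_prefix)⟩
  rcases eq_or_ne w [] with rfl | hwne
  · obtain ⟨z, hz⟩ := hne
    exact ⟨z, hz, Or.inr (List.nil_prefix)⟩
  by_contra hno
  push_neg at hno
  set W : Language A := {u : List A | u ∈ Z ∨ u = w} with hWdef
  have hWpc : IsPrefixCode W := by
    intro u hu v hv huv
    rcases hu with hu | hu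
    · rcases hv with hv | hv
      · exact h.1 u hu v hv huv
      · subst hv
        exact absurd huv (hno u hu).1
    · subst hu
      rcases hv with hv | hv
      · exact absurd huv (hno v hv).2
      · subst hv; rfl
  have hWe : [] ∉ W := by
    intro hmem
    rcases hmem with hmem | hmem
    · exact hnil hmem
    · exact hwne hmem.symm
  have hsub := h.2 W hWe hWpc (fun z hz => Or.inl hz)
  have hwZ : w ∈ Z := hsub (Or.inr rfl)
  exact absurd (List.prefix_refl w) (hno w hwZ).1

end StrongAltAux


/-- the product of two maximal prefix strong alt-induced codes is a
maximal prefix strong alt-induced code. -/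
theorem strongAltInduced_mul_maxPrefixCode {A : Type} [Fintype A] (Z Z' : Language A)
    (hZ : IsStrongAltInduced Z) (hZ' : IsStrongAltInduced Z')
    (h1 : IsMaxPrefixCode Z) (h2 : IsMaxPrefixCode Z') :
    IsStrongAltInduced (Z * Z') ∧ IsMaxPrefixCode (Z * Z') := by
  obtain ⟨X₁, Y₁, hS₁, rfl⟩ := hZ
  obtain ⟨X₂, Y₂, hS₂, rfl⟩ := hZ'
  set Z : Language A := X₁ * Y₁ with hZdef
  set Z' : Language A := X₂ * Y₂ with hZ'def
  have hX₂p : IsPrefixCode X₂ := claimA hS₂ h2.1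
  have hY₂s : IsSuffixCode Y₂ := claimB hS₂ h2.1
  obtain ⟨⟨hX₁ne, hY₁ne, hX₁e, hY₁e, -⟩, -, -⟩ := hS₁
  obtain ⟨⟨hX₂ne, hY₂ne, hX₂e, hY₂e, huniq₂⟩, hC1₂, hC2₂⟩ := hS₂
  -- basic facts about Z and Z'
  have hZne : Z.Nonempty := by
    obtain ⟨x, hx⟩ := hX₁ne; obtain ⟨y, hy⟩ := hY₁ne
    exact ⟨x ++ y, Language.append_mem_mul hx hy⟩
  have hZ'ne : Z'.Nonempty := by
    obtain ⟨x, hx⟩ := hX₂ne; obtain ⟨y, hy⟩ := hY₂ne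
    exact ⟨x ++ y, Language.append_mem_mul hx hy⟩
  have hZe : [] ∉ Z := by
    intro h
    obtain ⟨x, hx, y, hy, hxy⟩ := Language.mem_mul.mp h
    exact hX₁e ((List.append_eq_nil_iff.mp hxy).1 ▸ hx)
  have hZZ'e : [] ∉ Z * Z' := by
    intro h
    obtain ⟨x, hx, y, hy, hxy⟩ := Language.mem_mul.mp h
    exact hZe ((List.append_eq_nil_iff.mp hxy).1 ▸ hx)
  -- structure of (X₂, Y₂)
  have hY₂p : IsPrefixCode Y₂ := by
    intro u hu v hv huv
    obtain ⟨x, hx⟩ := hX₂ne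
    obtain ⟨r, hr⟩ := huv
    have := h2.1 (x ++ u) (Language.append_mem_mul hx hu) (x ++ v)
      (Language.append_mem_mul hx hv) ⟨r, by rw [List.append_assoc, hr]⟩
    exact List.append_cancel_left this
  -- the new pair
  have hXp : IsPrefixCode (Z * X₂) := prefixCode_mul h1.1 hX₂p
  have hXne : (Z * X₂).Nonempty := by
    obtain ⟨z, hz⟩ := hZne; obtain ⟨x, hx⟩ := hX₂ne
    exact ⟨z ++ x, Language.append_mem_mul hz hx⟩
  have hXe : [] ∉ Z * X₂ := by
    intro h
    obtain ⟨x, hx, y, hy, hxy⟩ := Language.mem_mul.mp h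
    exact hZe ((List.append_eq_nil_iff.mp hxy).1 ▸ hx)
  constructor
  · refine ⟨Z * X₂, Y₂, ⟨?_, ?_, ?_⟩, by rw [hZ'def, ← mul_assoc]⟩
    · exact altCode_of_prefixCodes hXp hY₂p hXne hY₂ne hXe hY₂e
    · -- (Z X₂)⁻¹ ((Z X₂) Y₂) ⊆ Y₂
      intro u hu
      obtain ⟨x, hx, hxu⟩ := hu
      obtain ⟨z₀, hz₀, x₂₀, hx₂₀, rfl⟩ := Language.mem_mul.mp hx
      obtain ⟨p, hp, y₂, hy₂, heq⟩ := Language.mem_mul.mp hxu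
      obtain ⟨z, hz, x₂, hx₂, rfl⟩ := Language.mem_mul.mp hp
      have h : z ++ (x₂ ++ y₂) = z₀ ++ (x₂₀ ++ u) := by
        simpa [List.append_assoc] using heq
      obtain ⟨rfl, h2'⟩ := split_pref h1.1 hz hz₀ h
      obtain ⟨rfl, h3⟩ := split_pref hX₂p hx₂ hx₂₀ h2'
      exact h3 ▸ hy₂
    · -- ((Z X₂) Y₂) Y₂⁻¹ ⊆ Z X₂
      intro u hu
      obtain ⟨y, hy, huy⟩ := hu
      obtain ⟨p, hp, y₂, hy₂, heq⟩ := Language.mem_mul.mp huy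
      obtain ⟨z, hz, x₂, hx₂, rfl⟩ := Language.mem_mul.mp hp
      obtain ⟨-, h4⟩ := split_suf hY₂s hy₂ hy heq
      exact h4 ▸ Language.append_mem_mul hz hx₂
  · constructor
    · exact prefixCode_mul h1.1 h2.1
    · intro W hWe hWpc hsub w hw
      obtain ⟨z, hz, hcz⟩ := comparable_of_max h1 hZne w
      obtain ⟨z'₀, hz'₀⟩ := id hZ'ne
      rcases hcz with hcz | hcz
      · obtain ⟨v, rfl⟩ := hcz
        obtain ⟨z', hz', hcz'⟩ := comparable_of_max h2 hZ'ne v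
        have hzz'W : z ++ z' ∈ W := hsub (Language.append_mem_mul hz hz')
        rcases hcz' with hcz' | hcz'
        · obtain ⟨r, rfl⟩ := hcz'
          have : z ++ z' <+: z ++ (z' ++ r) := ⟨r, by simp [List.append_assoc]⟩
          have heq := hWpc _ hzz'W _ hw this
          rw [← heq]
          exact Language.append_mem_mul hz hz'
        · have : z ++ v <+: z ++ z' := by
            obtain ⟨r, hr⟩ := hcz'
            exact ⟨r, by rw [List.append_assoc, hr]⟩
          have heq := hWpc _ hw _ hzz'W this
          rw [heq]
          exact Language.append_mem_mul hz hz'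
      · have hzz'W : z ++ z'₀ ∈ W := hsub (Language.append_mem_mul hz hz'₀)
        have : w <+: z ++ z'₀ := hcz.trans ⟨z'₀, rfl⟩
        have heq := hWpc _ hw _ hzz'W this
        rw [heq]
        exact Language.append_mem_mul hz hz'₀
end

section
/- Let A be a finite alphabet. If Z and Z' are thin strong alt-induced codes over A each of which is a maximal bifix code, then the product ZZ' is a strong alt-induced code that is a maximal bifix code. -/
namespace SAIAux

open List

attribute [local instance] Classical.propDecidable

variable {A : Type}

abbrev HasPref (X : Language A) (m : List A) : Prop := ∃ x ∈ X, x <+: m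
abbrev HasSuf (X : Language A) (m : List A) : Prop := ∃ x ∈ X, x <:+ m

noncomputable def dd (X : Language A) (w : List A) : ℕ :=
  Set.ncard {p : List A | p <+: w ∧ p ≠ [] ∧ ¬ HasSuf X p}

lemma dd_finite (X : Language A) (w : List A) :
    {p : List A | p <+: w ∧ p ≠ [] ∧ ¬ HasSuf X p}.Finite :=
  w.inits.finite_toSet.subset (fun p hp => by simpa [List.mem_inits] using hp.1)

lemma dd_nil (X : Language A) : dd X [] = 0 := by
  have : {p : List A | p <+: [] ∧ p ≠ [] ∧ ¬ HasSuf X p} = ∅ := by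
    ext p
    simp only [Set.mem_setOf_eq, Set.mem_empty_iff_false, iff_false]
    rintro ⟨hp, hne, -⟩
    exact hne (List.prefix_nil.1 hp)
  rw [dd, this, Set.ncard_empty]

lemma dd_snoc (X : Language A) (w : List A) (a : A) :
    dd X (w ++ [a]) = dd X w + (if HasSuf X (w ++ [a]) then 0 else 1) := by
  by_cases h : HasSuf X (w ++ [a])
  · rw [if_pos h, add_zero]
    have hset : {p : List A | p <+: w ++ [a] ∧ p ≠ [] ∧ ¬ HasSuf X p}
        = {p : List A | p <+: w ∧ p ≠ [] ∧ ¬ HasSuf X p} := by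
      ext p
      simp only [Set.mem_setOf_eq, List.prefix_concat_iff]
      constructor
      · rintro ⟨(rfl | hp), hne, hns⟩
        · exact absurd h hns
        · exact ⟨hp, hne, hns⟩
      · rintro ⟨hp, hne, hns⟩
        exact ⟨Or.inr hp, hne, hns⟩
    rw [dd, hset, dd]
  · rw [if_neg h]
    have hset : {p : List A | p <+: w ++ [a] ∧ p ≠ [] ∧ ¬ HasSuf X p}
        = insert (w ++ [a]) {p : List A | p <+: w ∧ p ≠ [] ∧ ¬ HasSuf X p} := by
      ext p
      simp only [Set.mem_setOf_eq, Set.mem_insert_iff, List.prefix_concat_iff]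
      constructor
      · rintro ⟨(rfl | hp), hne, hns⟩
        · exact Or.inl rfl
        · exact Or.inr ⟨hp, hne, hns⟩
      · rintro (rfl | ⟨hp, hne, hns⟩)
        · exact ⟨Or.inl rfl, by simp, h⟩
        · exact ⟨Or.inr hp, hne, hns⟩
    have hnm : w ++ [a] ∉ {p : List A | p <+: w ∧ p ≠ [] ∧ ¬ HasSuf X p} := by
      rintro ⟨hp, -, -⟩
      have := hp.length_le
      simp at this
    rw [dd, hset, Set.ncard_insert_of_notMem hnm (dd_finite X w), dd]

lemma dd_cons (X : Language A) (hpc : IsPrefixCode X) (hsc : IsSuffixCode X)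
    (hnil : [] ∉ X) (a : A) (w : List A) :
    dd X (a :: w) = dd X w + (if HasPref X (a :: w) then 0 else 1) := by
  induction w using List.reverseRecOn with
  | nil =>
    have hiff : HasSuf X [a] ↔ HasPref X [a] := by
      constructor
      · rintro ⟨x, hx, hs⟩
        rcases List.suffix_cons_iff.1 hs with rfl | hs'
        · exact ⟨_, hx, List.prefix_refl _⟩
        · exact absurd (List.suffix_nil.1 hs' ▸ hx) hnil
      · rintro ⟨x, hx, hp⟩
        rcases List.prefix_cons_iff.1 hp with rfl | ⟨t, rfl, ht⟩
        · exact absurd hx hnil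
        · have ht' : t = [] := List.prefix_nil.1 ht
          subst ht'
          exact ⟨_, hx, List.suffix_refl _⟩
    have h := dd_snoc X [] a
    simp only [List.nil_append] at h
    rw [h, if_congr hiff rfl rfl]
  | append_singleton w' b ih =>
    have e1 : a :: (w' ++ [b]) = (a :: w') ++ [b] := by simp
    have e2 : (a :: w') ++ [b] = a :: (w' ++ [b]) := by simp
    rw [e1, dd_snoc X (a :: w') b, ih, dd_snoc X w' b]
    -- key membership characterizations
    have hP12 : HasPref X (a :: w') → HasPref X ((a :: w') ++ [b]) :=
      fun ⟨x, hx, hp⟩ => ⟨x, hx, hp.trans (List.prefix_append _ _)⟩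
    have hS12 : HasSuf X (w' ++ [b]) → HasSuf X ((a :: w') ++ [b]) :=
      fun ⟨x, hx, hs⟩ => ⟨x, hx, hs.trans ⟨[a], by simp⟩⟩
    have hPm : (HasPref X ((a :: w') ++ [b]) ∧ ¬ HasPref X (a :: w')) ↔
        ((a :: w') ++ [b]) ∈ X := by
      constructor
      · rintro ⟨⟨x, hx, hp⟩, hn⟩
        rcases List.prefix_concat_iff.1 hp with rfl | hp'
        · exact hx
        · exact absurd ⟨x, hx, hp'⟩ hn
      · intro hm
        refine ⟨⟨_, hm, List.prefix_refl _⟩, ?_⟩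
        rintro ⟨x, hx, hp⟩
        have hxe : x = (a :: w') ++ [b] :=
          hpc x hx _ hm (hp.trans (List.prefix_append _ _))
        rw [hxe] at hp
        have := hp.length_le
        simp at this
    have hSm : (HasSuf X ((a :: w') ++ [b]) ∧ ¬ HasSuf X (w' ++ [b])) ↔
        ((a :: w') ++ [b]) ∈ X := by
      constructor
      · rintro ⟨⟨x, hx, hs⟩, hn⟩
        rw [e2] at hs
        rcases List.suffix_cons_iff.1 hs with rfl | hs'
        · rw [e2]; exact hx
        · exact absurd ⟨x, hx, hs'⟩ hn
      · intro hm
        refine ⟨⟨_, hm, List.suffix_refl _⟩, ?_⟩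
        rintro ⟨x, hx, hs⟩
        have hxe : x = (a :: w') ++ [b] :=
          hsc x hx _ hm (hs.trans ⟨[a], by simp⟩)
        rw [hxe] at hs
        have := hs.length_le
        simp at this
    by_cases hm : ((a :: w') ++ [b]) ∈ X
    · have h1 := hPm.2 hm
      have h2 := hSm.2 hm
      rw [if_neg h1.2, if_pos h1.1, if_neg h2.2, if_pos h2.1]
    · have hpiff : HasPref X ((a :: w') ++ [b]) ↔ HasPref X (a :: w') :=
        ⟨fun h => by by_contra hq; exact hm (hPm.1 ⟨h, hq⟩), hP12⟩
      have hsiff : HasSuf X ((a :: w') ++ [b]) ↔ HasSuf X (w' ++ [b]) :=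
        ⟨fun h => by by_contra hq; exact hm (hSm.1 ⟨h, hq⟩), hS12⟩
      rw [if_congr hpiff rfl rfl, if_congr hsiff rfl rfl]
      omega

lemma dd_prepend (X : Language A) (hpc : IsPrefixCode X) (hsc : IsSuffixCode X)
    (hnil : [] ∉ X) (w : List A) : ∀ u : List A, dd X w ≤ dd X (u ++ w) := by
  intro u
  induction u with
  | nil => simp
  | cons c u' ih =>
    rw [List.cons_append, dd_cons X hpc hsc hnil]
    exact le_trans ih (Nat.le_add_right _ _)

lemma fourway (X : Language A) (hmax : IsMaxBifixCode X) (hnil : [] ∉ X)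
    {w : List A} (hw : w ≠ []) :
    ∃ x ∈ X, x <+: w ∨ w <+: x ∨ x <:+ w ∨ w <:+ x := by
  by_contra hc
  push_neg at hc
  set X' : Language A := {u : List A | u ∈ X ∨ u = w} with hX'
  have hbif : IsBifixCode X' := by
    constructor
    · rintro u (hu | rfl) v (hv | rfl) hp
      · exact hmax.1.1 u hu v hv hp
      · exact absurd hp (hc u hu).1
      · exact absurd hp (hc v hv).2.1
      · rfl
    · rintro u (hu | rfl) v (hv | rfl) hs
      · exact hmax.1.2 u hu v hv hs
      · exact absurd hs (hc u hu).2.2.1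
      · exact absurd hs (hc v hv).2.2.2
      · rfl
  have hnil' : [] ∉ X' := by
    rintro (h | h)
    · exact hnil h
    · exact hw h.symm
  have hsub := hmax.2 X' hnil' hbif (fun u hu => Or.inl hu)
  have hwX : w ∈ X := hsub (Or.inr rfl)
  exact (hc w hwX).1 (List.prefix_refl w)

end SAIAux

namespace SAIAux
variable {A : Type}

open List

lemma right_complete (X : Language A) (hne : X.Nonempty) (hnil : [] ∉ X)
    (hthin : IsThin X) (hmax : IsMaxBifixCode X) (w : List A) :
    ∃ x ∈ X, x <+: w ∨ w <+: x := by
  by_contra hbad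
  push_neg at hbad
  obtain ⟨v, hv⟩ := hthin
  obtain ⟨x₀, hx₀⟩ := hne
  have hvne : v ≠ [] := by
    rintro rfl
    exact hv x₀ hx₀ List.nil_infix
  set w₀ := w ++ v with hw₀
  have hw₀ne : w₀ ≠ [] := by simp [hw₀, hvne]
  have hpc := hmax.1.1
  have hsc := hmax.1.2
  have hnopref : ∀ u : List A, ¬ HasPref X (w₀ ++ u) := by
    rintro u ⟨x, hx, hp⟩
    rw [hw₀, List.append_assoc] at hp
    rcases List.prefix_or_prefix_of_prefix hp (List.prefix_append w (v ++ u)) with h | h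
    · exact (hbad x hx).1 h
    · exact (hbad x hx).2 h
  have hsuf : ∀ u : List A, HasSuf X (w₀ ++ u) := by
    intro u
    have hne2 : w₀ ++ u ≠ [] := by
      simp [hw₀, hvne]
    obtain ⟨x, hx, hcmp⟩ := fourway X hmax hnil hne2
    rcases hcmp with h | h | h | h
    · exact absurd ⟨x, hx, h⟩ (hnopref u)
    · have hwx : w <+: x := by
        have h1 : w <+: w₀ ++ u := by
          rw [hw₀, List.append_assoc]; exact List.prefix_append _ _
        exact h1.trans h
      exact absurd hwx (hbad x hx).2
    · exact ⟨x, hx, h⟩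
    · have hinf : v <:+: w₀ ++ u := ⟨w, u, by rw [hw₀]⟩
      exact absurd (hinf.trans h.isInfix) (hv x hx)
  have hstab : ∀ u : List A, dd X (w₀ ++ u) = dd X w₀ := by
    intro u
    induction u using List.reverseRecOn with
    | nil => rw [List.append_nil]
    | append_singleton u' c ih =>
      rw [← List.append_assoc, dd_snoc, if_pos ?_, add_zero, ih]
      rw [List.append_assoc]
      exact hsuf (u' ++ [c])
  obtain ⟨a, t, hat⟩ := List.exists_cons_of_ne_nil hw₀ne
  have hgrow : dd X w₀ + 1 ≤ dd X (w₀ ++ w₀) := by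
    have e : w₀ ++ w₀ = a :: (t ++ w₀) := by rw [hat]; simp
    have hnp : ¬ HasPref X (a :: (t ++ w₀)) := by
      rw [← e]; exact hnopref w₀
    rw [e, dd_cons X hpc hsc hnil, if_neg hnp]
    exact Nat.add_le_add_right (dd_prepend X hpc hsc hnil w₀ t) 1
  have := hstab w₀
  omega

end SAIAux

namespace SAIAux
variable {A : Type}

open List

def AltL (P Q : Language A) : List (List A) → Prop
  | [] => True
  | u :: r => u ∈ P ∧ AltL Q P r

lemma toAltL : ∀ (P Q : Language A) (l : List (List A)),
    l.Chain' (fun u v => (u ∈ P → v ∈ Q) ∧ (u ∈ Q → v ∈ P)) →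
    l.headI ∈ P → AltL P Q l := by
  intro P Q l
  induction l generalizing P Q with
  | nil => intro _ _; trivial
  | cons u r ih =>
    intro hch hh
    refine ⟨hh, ?_⟩
    cases r with
    | nil => trivial
    | cons v r' =>
      have hcc := List.isChain_cons_cons.1 hch
      exact ih Q P (hcc.2.imp (fun a b h => ⟨h.2, h.1⟩)) (hcc.1.1 hh)

lemma altL_unique : ∀ (l l' : List (List A)) (P Q : Language A), [] ∉ P → [] ∉ Q →
    IsPrefixCode P → IsPrefixCode Q → AltL P Q l → AltL P Q l' →
    l.flatten = l'.flatten → l = l' := by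
  intro l
  induction l with
  | nil =>
    intro l' P Q hnP hnQ _ _ _ hl' hf
    cases l' with
    | nil => rfl
    | cons u r =>
      exfalso
      have : u ++ r.flatten = [] := by simpa using hf.symm
      exact hnP ((List.append_eq_nil_iff.1 this).1 ▸ hl'.1)
  | cons u r ih =>
    intro l' P Q hnP hnQ hP hQ hl hl' hf
    cases l' with
    | nil =>
      exfalso
      have : u ++ r.flatten = [] := by simpa using hf
      exact hnP ((List.append_eq_nil_iff.1 this).1 ▸ hl.1)
    | cons u' r' =>
      obtain ⟨hu, hr⟩ := hl
      obtain ⟨hu', hr'⟩ := hl'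
      have hff : u ++ r.flatten = u' ++ r'.flatten := by simpa using hf
      have h1 : u <+: u' ++ r'.flatten := hff ▸ List.prefix_append u r.flatten
      have heq : u = u' := by
        rcases List.prefix_or_prefix_of_prefix h1 (List.prefix_append u' r'.flatten) with h | h
        · exact hP u hu u' hu' h
        · exact (hP u' hu' u hu h).symm
      subst heq
      have hff2 : r.flatten = r'.flatten := List.append_cancel_left hff
      rw [ih r' Q P hnQ hnP hQ hP hr hr' hff2]

end SAIAux

/-- the product of two thin maximal-bifix strong alt-induced codes is a
maximal-bifix strong alt-induced code. -/
theorem strongAltInduced_mul_maxBifixCode {A : Type} [Fintype A] (Z Z' : Language A)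
    (htZ : IsThin Z) (htZ' : IsThin Z')
    (hZ : IsStrongAltInduced Z) (hZ' : IsStrongAltInduced Z')
    (h1 : IsMaxBifixCode Z) (h2 : IsMaxBifixCode Z') :
    IsStrongAltInduced (Z * Z') ∧ IsMaxBifixCode (Z * Z') := by
  classical
  obtain ⟨X1, Y1, hsc1, hZeq⟩ := hZ
  obtain ⟨X2, Y2, hsc2, hZeq'⟩ := hZ'
  have hpcZ : IsPrefixCode Z := h1.1.1
  have hscZ : IsSuffixCode Z := h1.1.2
  have hpcZ' : IsPrefixCode Z' := h2.1.1
  have hscZ' : IsSuffixCode Z' := h2.1.2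
  obtain ⟨x1, hx1⟩ := hsc1.1.1
  obtain ⟨y1, hy1⟩ := hsc1.1.2.1
  obtain ⟨x2, hx2⟩ := hsc2.1.1
  obtain ⟨y2, hy2⟩ := hsc2.1.2.1
  have hZne : Z.Nonempty :=
    ⟨x1 ++ y1, by rw [hZeq]; exact Language.mem_mul.2 ⟨x1, hx1, y1, hy1, rfl⟩⟩
  have hZ'ne : Z'.Nonempty :=
    ⟨x2 ++ y2, by rw [hZeq']; exact Language.mem_mul.2 ⟨x2, hx2, y2, hy2, rfl⟩⟩
  have hnZ : [] ∉ Z := by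
    rw [hZeq]
    intro hmem
    obtain ⟨a, ha, b, hb, hab⟩ := Language.mem_mul.1 hmem
    exact hsc1.1.2.2.1 ((List.append_eq_nil_iff.1 hab).1 ▸ ha)
  have hnZ' : [] ∉ Z' := by
    rw [hZeq']
    intro hmem
    obtain ⟨a, ha, b, hb, hab⟩ := Language.mem_mul.1 hmem
    exact hsc2.1.2.2.1 ((List.append_eq_nil_iff.1 hab).1 ▸ ha)
  have huniq : ∀ w : List A, w ≠ [] → ∀ l l' : List (List A),
      IsAltFact Z Z' l w → IsAltFact Z Z' l' w → SimilarFacts Z Z' l l' → l = l' := by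
    intro w hw l l' hl hl' hsim
    obtain ⟨-, hfl, -, hch⟩ := hl
    obtain ⟨-, hfl', -, hch'⟩ := hl'
    have hf : l.flatten = l'.flatten := by rw [hfl, hfl']
    rcases hsim.1 with ⟨hh1, hh2⟩ | ⟨hh1, hh2⟩
    · exact SAIAux.altL_unique l l' Z Z' hnZ hnZ' hpcZ hpcZ'
        (SAIAux.toAltL Z Z' l hch hh1) (SAIAux.toAltL Z Z' l' hch' hh2) hf
    · exact SAIAux.altL_unique l l' Z' Z hnZ' hnZ hpcZ' hpcZ
        (SAIAux.toAltL Z' Z l (hch.imp (fun a b h => ⟨h.2, h.1⟩)) hh1)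
        (SAIAux.toAltL Z' Z l' (hch'.imp (fun a b h => ⟨h.2, h.1⟩)) hh2) hf
  have hstrong1 : {u : List A | ∃ x ∈ Z, x ++ u ∈ Z * Z'} ⊆ Z' := by
    rintro u ⟨z, hz, hmem⟩
    obtain ⟨z₁, hz₁, y, hy, heq⟩ := Language.mem_mul.1 hmem
    have h1' : z₁ <+: z ++ u := heq ▸ List.prefix_append z₁ y
    have hzz : z₁ = z := by
      rcases List.prefix_or_prefix_of_prefix h1' (List.prefix_append z u) with h | h
      · exact hpcZ z₁ hz₁ z hz h
      · exact (hpcZ z hz z₁ hz₁ h).symm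
    subst hzz
    have hyu : y = u := List.append_cancel_left heq
    exact hyu ▸ hy
  have hstrong2 : {u : List A | ∃ y ∈ Z', u ++ y ∈ Z * Z'} ⊆ Z := by
    rintro u ⟨y, hy, hmem⟩
    obtain ⟨z₁, hz₁, y₁, hy₁, heq⟩ := Language.mem_mul.1 hmem
    have h1' : y₁ <:+ u ++ y := heq ▸ List.suffix_append z₁ y₁
    have hyy : y₁ = y := by
      rcases List.suffix_or_suffix_of_suffix h1' (List.suffix_append u y) with h | h
      · exact hscZ' y₁ hy₁ y hy h
      · exact (hscZ' y hy y₁ hy₁ h).symm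
    subst hyy
    have hzu : z₁ = u := List.append_cancel_right heq
    exact hzu ▸ hz₁
  have hprodpre : IsPrefixCode (Z * Z') := by
    rintro t₁ ht₁ t₂ ht₂ hp
    obtain ⟨z₁, hz₁, y₁, hy₁, rfl⟩ := Language.mem_mul.1 ht₁
    obtain ⟨z₂, hz₂, y₂, hy₂, rfl⟩ := Language.mem_mul.1 ht₂
    have h1' : z₁ <+: z₂ ++ y₂ := (List.prefix_append z₁ y₁).trans hp
    have hz12 : z₁ = z₂ := by
      rcases List.prefix_or_prefix_of_prefix h1' (List.prefix_append z₂ y₂) with h | h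
      · exact hpcZ z₁ hz₁ z₂ hz₂ h
      · exact (hpcZ z₂ hz₂ z₁ hz₁ h).symm
    subst hz12
    obtain ⟨k, hk⟩ := hp
    rw [List.append_assoc] at hk
    have hy12 : y₁ = y₂ := hpcZ' y₁ hy₁ y₂ hy₂ ⟨k, List.append_cancel_left hk⟩
    rw [hy12]
  have hprodsuf : IsSuffixCode (Z * Z') := by
    rintro t₁ ht₁ t₂ ht₂ hs
    obtain ⟨z₁, hz₁, y₁, hy₁, rfl⟩ := Language.mem_mul.1 ht₁
    obtain ⟨z₂, hz₂, y₂, hy₂, rfl⟩ := Language.mem_mul.1 ht₂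
    have h1' : y₁ <:+ z₂ ++ y₂ := (List.suffix_append z₁ y₁).trans hs
    have hy12 : y₁ = y₂ := by
      rcases List.suffix_or_suffix_of_suffix h1' (List.suffix_append z₂ y₂) with h | h
      · exact hscZ' y₁ hy₁ y₂ hy₂ h
      · exact (hscZ' y₂ hy₂ y₁ hy₁ h).symm
    subst hy12
    obtain ⟨k, hk⟩ := hs
    rw [← List.append_assoc] at hk
    have hz12 : z₁ = z₂ := hscZ z₁ hz₁ z₂ hz₂ ⟨k, List.append_cancel_right hk⟩
    rw [hz12]
  have hrc : ∀ t : List A, ∃ c ∈ Z * Z', c <+: t ∨ t <+: c := by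
    intro t
    obtain ⟨z, hz, hc⟩ := SAIAux.right_complete Z hZne hnZ htZ h1 t
    rcases hc with h | h
    · obtain ⟨u, rfl⟩ := h
      obtain ⟨z', hz', hc'⟩ := SAIAux.right_complete Z' hZ'ne hnZ' htZ' h2 u
      refine ⟨z ++ z', Language.mem_mul.2 ⟨z, hz, z', hz', rfl⟩, ?_⟩
      rcases hc' with h' | h'
      · obtain ⟨k, rfl⟩ := h'
        exact Or.inl ⟨k, by rw [List.append_assoc]⟩
      · obtain ⟨k, hk⟩ := h'
        exact Or.inr ⟨k, by rw [List.append_assoc, hk]⟩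
    · obtain ⟨z0', hz0'⟩ := hZ'ne
      exact ⟨z ++ z0', Language.mem_mul.2 ⟨z, hz, z0', hz0', rfl⟩,
        Or.inr (h.trans (List.prefix_append _ _))⟩
  refine ⟨⟨Z, Z', ⟨⟨hZne, hZ'ne, hnZ, hnZ', huniq⟩, hstrong1, hstrong2⟩, rfl⟩,
    ⟨hprodpre, hprodsuf⟩, ?_⟩
  intro T hTnil hTbif hsub t ht
  obtain ⟨c, hc, hcmp⟩ := hrc t
  rcases hcmp with h | h
  · have he := hTbif.1 c (hsub hc) t ht h
    rw [← he]; exact hc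
  · have he := hTbif.1 t ht c (hsub hc) h
    rw [he]; exact hc
end

section
/- Let A be a finite alphabet, let (X, Y) be a strong alternative code over A, and suppose the language Z = XY is regular. Then both X and Y are regular languages. -/
lemma leftQuot_regular {A : Type} {L : Language A} (hL : L.IsRegular) (w : List A) :
    Language.IsRegular {u | w ++ u ∈ L} := by
  obtain ⟨σ, inst, M, rfl⟩ := hL
  exact ⟨σ, inst, ⟨M.step, M.eval w, M.accept⟩, by
    ext u
    simp [DFA.mem_accepts, DFA.eval, DFA.evalFrom_of_append]; rfl⟩

lemma rightQuot_regular {A : Type} {L : Language A} (hL : L.IsRegular) (w : List A) :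
    Language.IsRegular {u | u ++ w ∈ L} := by
  obtain ⟨σ, inst, M, rfl⟩ := hL
  exact ⟨σ, inst, ⟨M.step, M.start, {s | M.evalFrom s w ∈ M.accept}⟩, by
    ext u
    simp [DFA.mem_accepts, DFA.eval, DFA.evalFrom_of_append]; rfl⟩

/-- if `(X, Y)` is a strong alternative code and `Z = XY` is regular,
then `X` and `Y` are regular. -/
theorem strongAltCode_regular_components {A : Type} [Fintype A] (X Y : Language A)
    (h : IsStrongAltCode X Y) (hreg : (X * Y).IsRegular) :
    X.IsRegular ∧ Y.IsRegular := by
  obtain ⟨⟨⟨x₀, hx₀⟩, ⟨y₀, hy₀⟩, -, -, -⟩, hXZ, hZY⟩ := h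
  constructor
  · have hX : X = {u | u ++ y₀ ∈ X * Y} := by
      ext u
      constructor
      · intro hu
        exact Language.mem_mul.mpr ⟨u, hu, y₀, hy₀, rfl⟩
      · intro hu
        exact hZY ⟨y₀, hy₀, hu⟩
    rw [hX]
    exact rightQuot_regular hreg y₀
  · have hY : Y = {u | x₀ ++ u ∈ X * Y} := by
      ext u
      constructor
      · intro hu
        exact Language.mem_mul.mpr ⟨x₀, hx₀, u, hu, rfl⟩
      · intro hu
        exact hXZ ⟨x₀, hx₀, hu⟩
    rw [hY]
    exact leftQuot_regular hreg x₀
end
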